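/- arXiv:1805.08461 — 2 statements merged into one kernel-verified Lean document; each statement's English description precedes it below -/
import Mathlib

section
/- For every n ≥ 2, the restricted 2-connectivity of BH_n equals 4n − 4: there exists a restricted 2-vertex cut of BH_n of cardinality 4n − 4, and every restricted 2-vertex cut of BH_n has cardinality at least 4n − 4. -/
open SimpleGraph

/-- `bhSigma u` is 1 if the inner index `u 0` is 0 or 2, and 3 (= -1) otherwise. -/
def bhSigma {n : ℕ} [NeZero n] (u : Fin n → ZMod 4) : ZMod 4 :=
  if u 0 = 0 ∨ u 0 = 2 then 1 else 3

/-- The adjacency relation underlying the balanced hypercube `BH n`. -/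
def bhRel {n : ℕ} [NeZero n] (u v : Fin n → ZMod 4) : Prop :=
  ∃ ε : ZMod 4, (ε = 1 ∨ ε = 3) ∧
    ((v 0 = u 0 + ε ∧ ∀ i : Fin n, i ≠ 0 → v i = u i) ∨
     (∃ i : Fin n, 1 ≤ (i : ℕ) ∧ v 0 = u 0 + ε ∧ v i = u i + bhSigma u ∧
        ∀ j : Fin n, j ≠ 0 → j ≠ i → v j = u j))

/-- The `n`-dimensional balanced hypercube. -/
def BH (n : ℕ) [NeZero n] : SimpleGraph (Fin n → ZMod 4) :=
  SimpleGraph.fromRel bhRel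

/-- `F` is a restricted `h`-vertex cut of `G`: deleting `F` disconnects `G`,
and every vertex of the remaining graph has at least `h` neighbours there
(equivalently, every connected component has minimum degree at least `h`). -/
def IsRestrictedCut {V : Type*} (G : SimpleGraph V) (h : ℕ) (F : Set V) : Prop :=
  ¬ (G.induce Fᶜ).Connected ∧
    ∀ v : ↥Fᶜ, h ≤ ((G.induce Fᶜ).neighborSet v).ncard

/-- `F` is a `g`-vertex cut of `G`: deleting `F` disconnects `G`, and every
connected component of the remaining graph has at least `g + 1` vertices. -/
def IsGVertexCut {V : Type*} (G : SimpleGraph V) (g : ℕ) (F : Set V) : Prop :=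
  ¬ (G.induce Fᶜ).Connected ∧
    ∀ C : (G.induce Fᶜ).ConnectedComponent, g + 1 ≤ C.supp.ncard

/-- The vertex neighbourhood of a set `S`: vertices outside `S` adjacent to some vertex of `S`. -/
def setNbhd {V : Type*} (G : SimpleGraph V) (S : Set V) : Set V :=
  {v | v ∉ S ∧ ∃ u ∈ S, G.Adj v u}

/-- The vertex of `BH n` with first three coordinates `a, b, c` and all others `0`. -/
def tVertex (n : ℕ) (a b c : ZMod 4) : Fin n → ZMod 4 :=
  fun j => if (j : ℕ) = 0 then a else if (j : ℕ) = 1 then b else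
    if (j : ℕ) = 2 then c else 0

/-- The distinguished 12-vertex set `T` in `BH n` (`n ≥ 3`). -/
def Tset (n : ℕ) : Set (Fin n → ZMod 4) :=
  {tVertex n 0 0 0, tVertex n 2 0 0, tVertex n 1 0 0, tVertex n 3 0 0,
   tVertex n 0 3 0, tVertex n 2 3 0, tVertex n 1 0 1, tVertex n 3 0 1,
   tVertex n 0 3 1, tVertex n 2 3 1, tVertex n 1 3 1, tVertex n 3 3 1}

/-- The last coordinate `u (n-1)` of a vertex of `BH n`. -/
def lastCoord (n : ℕ) [NeZero n] (u : Fin n → ZMod 4) : ZMod 4 :=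
  u ⟨n - 1, Nat.sub_lt (Nat.pos_of_ne_zero (NeZero.ne n)) Nat.one_pos⟩

namespace BHaux

variable {n : ℕ}

section basic
variable [NeZero n]

/-- Neighbour of `u` across dimension 0. -/
def nbr0 (u : Fin n → ZMod 4) (e : ZMod 4) : Fin n → ZMod 4 :=
  fun j => if (j : ℕ) = 0 then u 0 + e else u j

/-- Neighbour of `u` across dimension `i ≥ 1`. -/
def nbrI (u : Fin n → ZMod 4) (e : ZMod 4) (i : Fin n) : Fin n → ZMod 4 :=
  fun j => if (j : ℕ) = 0 then u 0 + e else if j = i then u i + bhSigma u else u j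

/-- The twin of `u`. -/
def twin (u : Fin n → ZMod 4) : Fin n → ZMod 4 :=
  fun j => if (j : ℕ) = 0 then u 0 + 2 else u j



lemma val_eq_zero_iff {j : Fin n} : (j : ℕ) = 0 ↔ j = 0 := by
  constructor
  · intro h; exact Fin.ext (by simpa using h)
  · rintro rfl; simp

@[simp] lemma nbr0_at0 (u : Fin n → ZMod 4) (e : ZMod 4) : nbr0 u e 0 = u 0 + e := by
  simp [nbr0]

lemma nbr0_ne {j : Fin n} (h : j ≠ 0) (u : Fin n → ZMod 4) (e : ZMod 4) :
    nbr0 u e j = u j := by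
  have h' : (j : ℕ) ≠ 0 := fun hh => h (val_eq_zero_iff.mp hh)
  simp [nbr0, h']

@[simp] lemma nbrI_at0 (u : Fin n → ZMod 4) (e : ZMod 4) (i : Fin n) :
    nbrI u e i 0 = u 0 + e := by simp [nbrI]

lemma nbrI_atI {i : Fin n} (hi : i ≠ 0) (u : Fin n → ZMod 4) (e : ZMod 4) :
    nbrI u e i i = u i + bhSigma u := by
  have h' : (i : ℕ) ≠ 0 := fun hh => hi (val_eq_zero_iff.mp hh)
  simp [nbrI, h']

lemma nbrI_other {i j : Fin n} (hj : j ≠ 0) (hji : j ≠ i) (u : Fin n → ZMod 4) (e : ZMod 4) :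
    nbrI u e i j = u j := by
  have h' : (j : ℕ) ≠ 0 := fun hh => hj (val_eq_zero_iff.mp hh)
  simp [nbrI, h', hji]

@[simp] lemma twin_at0 (u : Fin n → ZMod 4) : twin u 0 = u 0 + 2 := by simp [twin]

lemma twin_ne {j : Fin n} (h : j ≠ 0) (u : Fin n → ZMod 4) : twin u j = u j := by
  have h' : (j : ℕ) ≠ 0 := fun hh => h (val_eq_zero_iff.mp hh)
  simp [twin, h']

lemma sigma_cases (u : Fin n → ZMod 4) : bhSigma u = 1 ∨ bhSigma u = 3 := by
  unfold bhSigma; split <;> simp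

lemma sigma_ne_zero (u : Fin n → ZMod 4) : bhSigma u ≠ 0 := by
  rcases sigma_cases u with h | h <;> rw [h] <;> decide

lemma eps_add_ne {a e : ZMod 4} (he : e = 1 ∨ e = 3) : a + e ≠ a := by
  revert he; revert a e; decide

/-- Normal form for the relation `bhRel`. -/
lemma bhRel_iff {u v : Fin n → ZMod 4} :
    bhRel u v ↔ ∃ e, (e = 1 ∨ e = 3) ∧
      (v = nbr0 u e ∨ ∃ i : Fin n, 1 ≤ (i : ℕ) ∧ v = nbrI u e i) := by
  constructor
  · rintro ⟨e, he, h | ⟨i, hi1, h0, hii, hrest⟩⟩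
    · refine ⟨e, he, Or.inl ?_⟩
      funext j
      by_cases hj : j = 0
      · subst hj; rw [h.1, nbr0_at0]
      · rw [h.2 j hj, nbr0_ne hj]
    · have hi0 : i ≠ 0 := fun h => by simp [h] at hi1
      refine ⟨e, he, Or.inr ⟨i, hi1, ?_⟩⟩
      funext j
      by_cases hj : j = 0
      · subst hj; rw [h0, nbrI_at0]
      · by_cases hji : j = i
        · subst hji; rw [hii, nbrI_atI hj]
        · rw [hrest j hj hji, nbrI_other hj hji]
  · rintro ⟨e, he, h | ⟨i, hi1, h⟩⟩
    · subst h
      exact ⟨e, he, Or.inl ⟨nbr0_at0 u e, fun j hj => nbr0_ne hj u e⟩⟩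
    · subst h
      have hi0 : i ≠ 0 := fun h => by simp [h] at hi1
      exact ⟨e, he, Or.inr ⟨i, hi1, nbrI_at0 u e i, nbrI_atI hi0 u e,
        fun j hj hji => nbrI_other hj hji u e⟩⟩

lemma bhRel_ne {u v : Fin n → ZMod 4} (h : bhRel u v) : u ≠ v := by
  rcases bhRel_iff.mp h with ⟨e, he, h | ⟨i, hi1, h⟩⟩ <;> subst h <;> intro hh
  · exact eps_add_ne he ((congrFun hh 0).trans (nbr0_at0 u e)).symm
  · exact eps_add_ne he ((congrFun hh 0).trans (nbrI_at0 u e i)).symm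

lemma sigma_add_eps (a e : ZMod 4) (he : e = 1 ∨ e = 3) :
    (if a = 0 ∨ a = 2 then (1 : ZMod 4) else 3) + (if a + e = 0 ∨ a + e = 2 then (1 : ZMod 4) else 3) = 0 := by
  revert he; revert a e; decide

lemma sigma_nbr (u v : Fin n → ZMod 4) {e : ZMod 4} (he : e = 1 ∨ e = 3)
    (hv : v 0 = u 0 + e) : bhSigma u + bhSigma v = 0 := by
  unfold bhSigma; rw [hv]; exact sigma_add_eps (u 0) e he

lemma bhRel_symm {u v : Fin n → ZMod 4} (h : bhRel u v) : bhRel v u := by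
  rcases h with ⟨e, he, h | ⟨i, hi1, h0, hii, hrest⟩⟩
  · refine ⟨-e, by rcases he with rfl | rfl <;> [right; left] <;> decide, Or.inl ⟨?_, ?_⟩⟩
    · rw [h.1]; ring
    · intro i hi; exact (h.2 i hi).symm
  · refine ⟨-e, by rcases he with rfl | rfl <;> [right; left] <;> decide,
      Or.inr ⟨i, hi1, ?_, ?_, ?_⟩⟩
    · rw [h0]; ring
    · have hs := sigma_nbr u v he h0
      rw [hii]
      have : bhSigma v = -bhSigma u := by linear_combination hs
      rw [this]; ring
    · intro j hj hji; exact (hrest j hj hji).symm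

lemma adj_iff {u v : Fin n → ZMod 4} : (BH n).Adj u v ↔ bhRel u v := by
  rw [BH, SimpleGraph.fromRel_adj]
  constructor
  · rintro ⟨_, h | h⟩
    · exact h
    · exact bhRel_symm h
  · intro h
    exact ⟨bhRel_ne h, Or.inl h⟩

lemma adj_nbr0 (u : Fin n → ZMod 4) {e : ZMod 4} (he : e = 1 ∨ e = 3) :
    (BH n).Adj u (nbr0 u e) :=
  adj_iff.mpr (bhRel_iff.mpr ⟨e, he, Or.inl rfl⟩)

lemma adj_nbrI (u : Fin n → ZMod 4) {e : ZMod 4} (he : e = 1 ∨ e = 3) {i : Fin n}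
    (hi : 1 ≤ (i : ℕ)) : (BH n).Adj u (nbrI u e i) :=
  adj_iff.mpr (bhRel_iff.mpr ⟨e, he, Or.inr ⟨i, hi, rfl⟩⟩)

lemma twin_not_adj (u : Fin n → ZMod 4) : ¬ (BH n).Adj u (twin u) := by
  intro h
  rcases bhRel_iff.mp (adj_iff.mp h) with ⟨e, he, h | ⟨i, hi1, h⟩⟩
  · have h0 := congrFun h 0
    rw [twin_at0, nbr0_at0] at h0
    have h2 : e = 2 := (add_left_cancel h0).symm
    subst h2; rcases he with he | he <;> exact absurd he (by decide)
  · have hi0 : i ≠ 0 := fun hh => by simp [hh] at hi1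
    have h0 := congrFun h i
    rw [twin_ne hi0, nbrI_atI hi0] at h0
    have h2 : u i + 0 = u i + bhSigma u := by rw [add_zero]; exact h0
    exact sigma_ne_zero u (add_left_cancel h2).symm

lemma twin_not_mem_self (u : Fin n → ZMod 4) : twin u ≠ u := by
  intro h
  have h0 := congrFun h 0
  rw [twin_at0] at h0
  have h2 : u 0 + 2 = u 0 + 0 := by rw [add_zero]; exact h0
  exact absurd (add_left_cancel h2) (by decide)

end basic
end BHaux
namespace BHaux
variable {n : ℕ} [NeZero n]

/-- Reachability in `BH n` avoiding the vertex set `F`. -/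
def HR (F : Set (Fin n → ZMod 4)) : (Fin n → ZMod 4) → (Fin n → ZMod 4) → Prop :=
  Relation.ReflTransGen (fun x y => (BH n).Adj x y ∧ y ∉ F)

lemma HR.refl {F : Set (Fin n → ZMod 4)} (a : Fin n → ZMod 4) : HR F a a :=
  Relation.ReflTransGen.refl

lemma HR.single {F : Set (Fin n → ZMod 4)} {a b : Fin n → ZMod 4}
    (h : (BH n).Adj a b) (hb : b ∉ F) : HR F a b :=
  Relation.ReflTransGen.single ⟨h, hb⟩

lemma HR.trans {F : Set (Fin n → ZMod 4)} {a b c : Fin n → ZMod 4}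
    (h : HR F a b) (h' : HR F b c) : HR F a c :=
  Relation.ReflTransGen.trans h h'

lemma HR.end_not_mem {F : Set (Fin n → ZMod 4)} {a b : Fin n → ZMod 4}
    (ha : a ∉ F) (h : HR F a b) : b ∉ F := by
  induction h with
  | refl => exact ha
  | tail _ h2 _ => exact h2.2

lemma HR.symm {F : Set (Fin n → ZMod 4)} {a b : Fin n → ZMod 4}
    (ha : a ∉ F) (h : HR F a b) : HR F b a := by
  induction h with
  | refl => exact HR.refl a
  | tail h1 h2 ih => exact Relation.ReflTransGen.head ⟨h2.1.symm, HR.end_not_mem ha h1⟩ ih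

lemma HR.toInduce {F : Set (Fin n → ZMod 4)} {a b : Fin n → ZMod 4} (h : HR F a b) :
    ∀ (ha : a ∉ F) (hb : b ∉ F),
      ((BH n).induce Fᶜ).Reachable ⟨a, ha⟩ ⟨b, hb⟩ := by
  induction h with
  | refl => intro ha hb; exact SimpleGraph.Reachable.refl _
  | @tail b c h1 h2 ih =>
    intro ha hc
    have hb : b ∉ F := HR.end_not_mem ha h1
    refine (ih ha hb).trans (SimpleGraph.Adj.reachable ?_)
    exact h2.1

/-- `u` has `2 n` distinct neighbours; if they all lie in `F` then `F` is large. -/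
lemma deg_lemma {F : Set (Fin n → ZMod 4)} {u : Fin n → ZMod 4}
    (h : ∀ w, (BH n).Adj u w → w ∈ F) : 2 * n ≤ F.ncard := by
  classical
  set ψ : ZMod 4 × Fin n → (Fin n → ZMod 4) :=
    fun p => if (p.2 : ℕ) = 0 then nbr0 u p.1 else nbrI u p.1 p.2 with hψ
  set D : Finset (ZMod 4 × Fin n) := ({1, 3} : Finset (ZMod 4)) ×ˢ Finset.univ with hD
  have hcard : D.card = 2 * n := by
    rw [hD, Finset.card_product]
    have : ({1, 3} : Finset (ZMod 4)).card = 2 := by decide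
    simp [this, Finset.card_univ, Nat.mul_comm]
  have hmem : ∀ p ∈ D, ψ p ∈ F := by
    rintro ⟨e, i⟩ hp
    have he : e = 1 ∨ e = 3 := by
      simp [hD] at hp; tauto
    by_cases hi : (i : ℕ) = 0
    · have := adj_nbr0 u he (n := n)
      simp only [hψ, hi, if_pos]
      exact h _ this
    · have hi1 : 1 ≤ (i : ℕ) := Nat.one_le_iff_ne_zero.mpr hi
      have := adj_nbrI u he hi1
      simp only [hψ, hi, if_neg, ite_false]
      exact h _ this
  have hat0 : ∀ p : ZMod 4 × Fin n, ψ p 0 = u 0 + p.1 := by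
    rintro ⟨e, i⟩
    by_cases hi : (i : ℕ) = 0 <;> simp only [hψ, hi, ↓reduceIte] <;> simp [nbr0, nbrI]
  have hinj : Set.InjOn ψ D := by
    rintro ⟨e, i⟩ hp ⟨e', i'⟩ hq hpq
    have h0 : u 0 + e = u 0 + e' := by
      rw [← hat0 (e, i), ← hat0 (e', i'), hpq]
    have he : e = e' := add_left_cancel h0
    subst he
    rcases eq_or_ne i i' with rfl | hii
    · rfl
    exfalso
    rcases Nat.eq_zero_or_pos (i : ℕ) with hi | hi
    · have hi'0 : (i' : ℕ) ≠ 0 := by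
        intro hh
        exact hii (val_eq_zero_iff.mp hi ▸ (val_eq_zero_iff.mp hh ▸ rfl))
      have hi'ne : i' ≠ 0 := fun hh => hi'0 (hh ▸ by simp)
      have := congrFun hpq i'
      simp only [hψ, hi, if_pos, hi'0, if_neg, ite_false] at this
      rw [nbr0_ne hi'ne, nbrI_atI hi'ne] at this
      have h2 : u i' + 0 = u i' + bhSigma u := by rw [add_zero]; exact this
      exact sigma_ne_zero u (add_left_cancel h2).symm
    · have hi0 : (i : ℕ) ≠ 0 := Nat.pos_iff_ne_zero.mp hi
      have hine : i ≠ 0 := fun hh => hi0 (hh ▸ by simp)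
      have := congrFun hpq i
      by_cases hi' : (i' : ℕ) = 0
      · simp only [hψ, hi0, if_neg, ite_false, hi', if_pos] at this
        rw [nbr0_ne hine, nbrI_atI hine] at this
        have h2 : u i + 0 = u i + bhSigma u := by rw [add_zero]; exact this.symm
        exact sigma_ne_zero u (add_left_cancel h2).symm
      · simp only [hψ, hi0, hi', if_neg, ite_false] at this
        rw [nbrI_atI hine, nbrI_other hine hii] at this
        have h2 : u i + 0 = u i + bhSigma u := by rw [add_zero]; exact this.symm
        exact sigma_ne_zero u (add_left_cancel h2).symm
  calc 2 * n = D.card := hcard.symm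
    _ = (D.image ψ).card := (Finset.card_image_of_injOn hinj).symm
    _ ≤ F.toFinset.card := by
        apply Finset.card_le_card
        intro x hx
        rcases Finset.mem_image.mp hx with ⟨p, hp, rfl⟩
        exact Set.mem_toFinset.mpr (hmem p hp)
    _ = F.ncard := (Set.ncard_eq_toFinset_card' F).symm

end BHaux
namespace BHaux

/-! ### Arithmetic helpers -/

lemma pow_lemma1 : ∀ k : ℕ, 4 * k + 4 ≤ 4 ^ (k + 1) := by
  intro k
  induction k with
  | zero => simp
  | succ k ih =>
    have : 4 ^ (k + 1 + 1) = 4 * 4 ^ (k + 1) := by rw [pow_succ]; ring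
    omega

lemma pow_lemma2 : ∀ k : ℕ, 1 ≤ k → 8 * k + 5 ≤ 4 ^ (k + 1) := by
  intro k
  induction k with
  | zero => omega
  | succ k ih =>
    intro _
    rcases Nat.eq_zero_or_pos k with rfl | hk
    · norm_num
    · have h1 := ih hk
      have : 4 ^ (k + 1 + 1) = 4 * 4 ^ (k + 1) := by rw [pow_succ]; ring
      omega

lemma pow_lemma3 : ∀ k : ℕ, 2 * k + 1 ≤ 4 ^ k := by
  intro k
  induction k with
  | zero => simp
  | succ k ih =>
    have : 4 ^ (k + 1) = 4 * 4 ^ k := by rw [pow_succ]; ring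
    omega

/-! ### Counting helpers -/

lemma four_le_ncard {α : Type*} {F : Set α} {a b c d : α}
    (ha : a ∈ F) (hb : b ∈ F) (hc : c ∈ F) (hd : d ∈ F)
    (hab : a ≠ b) (hac : a ≠ c) (had : a ≠ d) (hbc : b ≠ c) (hbd : b ≠ d) (hcd : c ≠ d)
    (hF : F.Finite) : 4 ≤ F.ncard := by
  classical
  have hsub : ({a, b, c, d} : Finset α) ⊆ hF.toFinset := by
    intro x hx
    simp only [Finset.mem_insert, Finset.mem_singleton] at hx
    rcases hx with rfl | rfl | rfl | rfl <;> simp [Set.Finite.mem_toFinset, *]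
  have hcard : ({a, b, c, d} : Finset α).card = 4 := by
    rw [Finset.card_insert_of_notMem (by simp [hab, hac, had]),
      Finset.card_insert_of_notMem (by simp [hbc, hbd]),
      Finset.card_insert_of_notMem (by simp [hcd]), Finset.card_singleton]
  have := Finset.card_le_card hsub
  rw [hcard] at this
  rwa [Set.ncard_eq_toFinset_card F hF]

lemma pair_count {α β : Type*} [DecidableEq α] {F : Set α} (hF : F.Finite) (I : Finset β)
    (g1 g2 : β → α)
    (hin : ∀ i ∈ I, g1 i ∈ F ∧ g2 i ∈ F)
    (hne : ∀ i ∈ I, g1 i ≠ g2 i)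
    (hdisj : ∀ i ∈ I, ∀ j ∈ I, i ≠ j →
      g1 i ≠ g1 j ∧ g1 i ≠ g2 j ∧ g2 i ≠ g1 j ∧ g2 i ≠ g2 j) :
    2 * I.card ≤ F.ncard := by
  classical
  have hdis : ∀ i ∈ I, ∀ j ∈ I, i ≠ j →
      Disjoint ({g1 i, g2 i} : Finset α) ({g1 j, g2 j} : Finset α) := by
    intro i hi j hj hij
    obtain ⟨h1, h2, h3, h4⟩ := hdisj i hi j hj hij
    simp only [Finset.disjoint_insert_left, Finset.disjoint_singleton_left,
      Finset.mem_insert, Finset.mem_singleton]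
    tauto
  have hcard : (I.biUnion (fun i => ({g1 i, g2 i} : Finset α))).card = 2 * I.card := by
    rw [Finset.card_biUnion hdis]
    rw [Finset.sum_congr rfl (fun i hi => ?_), Finset.sum_const, smul_eq_mul, Nat.mul_comm]
    rw [Finset.card_insert_of_notMem (by simp [hne i hi]), Finset.card_singleton]
  have hsub : I.biUnion (fun i => ({g1 i, g2 i} : Finset α)) ⊆ hF.toFinset := by
    intro x hx
    rcases Finset.mem_biUnion.mp hx with ⟨i, hi, hxi⟩
    simp only [Finset.mem_insert, Finset.mem_singleton] at hxi
    rcases hxi with rfl | rfl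
    · exact (Set.Finite.mem_toFinset hF).mpr (hin i hi).1
    · exact (Set.Finite.mem_toFinset hF).mpr (hin i hi).2
  have := Finset.card_le_card hsub
  rw [hcard] at this
  rwa [Set.ncard_eq_toFinset_card F hF]

lemma ncard_split {α : Type*} [Fintype α] (F L : Set α) :
    F.ncard = (F ∩ L).ncard + (F \ L).ncard := by
  classical
  rw [← Set.ncard_union_eq (by
      exact Set.disjoint_of_subset_left Set.inter_subset_right Set.disjoint_sdiff_right
    ) (Set.toFinite _) (Set.toFinite _)]
  congr 1
  ext x
  by_cases hx : x ∈ L <;> simp [hx]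

/-! ### The last coordinate, layers and cross edges -/

variable {n : ℕ} [NeZero n]

def lastN (n : ℕ) [NeZero n] : Fin n :=
  ⟨n - 1, Nat.sub_lt (Nat.pos_of_ne_zero (NeZero.ne n)) Nat.one_pos⟩

lemma lastCoord_eq (u : Fin n → ZMod 4) : lastCoord n u = u (lastN n) := rfl

lemma lastN_ne_zero (hn : 2 ≤ n) : lastN n ≠ 0 := by
  intro h
  have := congrArg Fin.val h
  simp only [lastN] at this
  rw [Fin.val_zero] at this
  omega

lemma lastN_val (hn : 2 ≤ n) : (lastN n : ℕ) = n - 1 := rfl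

/-- The two cross neighbours of `u` (changing the last coordinate). -/
def crossN (u : Fin n → ZMod 4) (e : ZMod 4) : Fin n → ZMod 4 := nbrI u e (lastN n)

lemma adj_crossN (hn : 2 ≤ n) (u : Fin n → ZMod 4) {e : ZMod 4} (he : e = 1 ∨ e = 3) :
    (BH n).Adj u (crossN u e) :=
  adj_nbrI u he (by rw [lastN_val hn]; omega)

lemma crossN_last (hn : 2 ≤ n) (u : Fin n → ZMod 4) (e : ZMod 4) :
    lastCoord n (crossN u e) = lastCoord n u + bhSigma u := by
  rw [lastCoord_eq, lastCoord_eq, crossN, nbrI_atI (lastN_ne_zero hn)]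

lemma crossN_last_ne (hn : 2 ≤ n) (u : Fin n → ZMod 4) (e : ZMod 4) :
    lastCoord n (crossN u e) ≠ lastCoord n u := by
  rw [crossN_last hn]
  intro h
  have h2 : lastCoord n u + bhSigma u = lastCoord n u + 0 := by rw [add_zero]; exact h
  exact sigma_ne_zero u (add_left_cancel h2)

lemma crossN_at0 (u : Fin n → ZMod 4) (e : ZMod 4) : crossN u e 0 = u 0 + e := by
  rw [crossN, nbrI_at0]

lemma crossN_other (hn : 2 ≤ n) {j : Fin n} (hj : j ≠ 0) (hjl : j ≠ lastN n)
    (u : Fin n → ZMod 4) (e : ZMod 4) : crossN u e j = u j :=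
  nbrI_other hj hjl u e

/-- If `v` is adjacent to `u` then either it is in the same layer, or it is
one of the two cross neighbours. -/
lemma adj_layer_cases (hn : 2 ≤ n) {u v : Fin n → ZMod 4} (h : (BH n).Adj u v) :
    (lastCoord n v = lastCoord n u) ∨ (v = crossN u 1 ∨ v = crossN u 3) := by
  rcases bhRel_iff.mp (adj_iff.mp h) with ⟨e, he, rfl | ⟨i, hi1, rfl⟩⟩
  · left
    rw [lastCoord_eq, lastCoord_eq, nbr0_ne (lastN_ne_zero hn)]
  · rcases eq_or_ne i (lastN n) with rfl | hil
    · right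
      rcases he with rfl | rfl
      · exact Or.inl rfl
      · exact Or.inr rfl
    · left
      have hi0 : i ≠ 0 := fun hh => by rw [hh] at hi1; simp at hi1
      rw [lastCoord_eq, lastCoord_eq, nbrI_other (lastN_ne_zero hn) (Ne.symm hil)]

lemma zmod4_cross {a b e e' : ZMod 4} (he : e = 1 ∨ e = 3) (he' : e' = 1 ∨ e' = 3)
    (h : b + e' = a + e) : b = a ∨ b = a + 2 := by
  revert h he he'; revert a b e e'; decide

/-- Two cross neighbours of same-layer vertices agree only for a vertex and its twin. -/
lemma crossN_eq_cases (hn : 2 ≤ n) {u v : Fin n → ZMod 4} {e e' : ZMod 4}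
    (he : e = 1 ∨ e = 3) (he' : e' = 1 ∨ e' = 3)
    (hl : lastCoord n u = lastCoord n v)
    (h : crossN u e = crossN v e') : v = u ∨ v = twin u := by
  have hother : ∀ j : Fin n, j ≠ 0 → j ≠ lastN n → v j = u j := by
    intro j hj hjl
    have := congrFun h j
    exact ((crossN_other hn hj hjl u e).symm.trans this).trans (crossN_other hn hj hjl v e') |>.symm
  have hlastv : v (lastN n) = u (lastN n) := hl.symm
  have h0 := congrFun h 0
  rw [crossN_at0, crossN_at0] at h0
  rcases zmod4_cross he he' h0.symm with hd | hd
  · left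
    funext j
    rcases eq_or_ne j 0 with rfl | hj
    · exact hd
    rcases eq_or_ne j (lastN n) with rfl | hjl
    · exact hlastv
    · exact hother j hj hjl
  · right
    funext j
    rcases eq_or_ne j 0 with rfl | hj
    · rw [twin_at0]; exact hd
    rw [twin_ne hj]
    rcases eq_or_ne j (lastN n) with rfl | hjl
    · exact hlastv
    · exact hother j hj hjl

end BHaux
namespace BHaux

/-- Embed a vertex of `BH (n-1)` into layer `l` of `BH n`. -/
def lift (n : ℕ) (l : ZMod 4) (x : Fin (n - 1) → ZMod 4) : Fin n → ZMod 4 :=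
  fun j => if h : (j : ℕ) < n - 1 then x ⟨j, h⟩ else l

/-- Forget the last coordinate. -/
def drop (n : ℕ) (v : Fin n → ZMod 4) : Fin (n - 1) → ZMod 4 :=
  fun i => v ⟨i, Nat.lt_of_lt_of_le i.isLt (Nat.sub_le n 1)⟩

section lift
variable {n : ℕ} [NeZero n] [NeZero (n - 1)]

lemma lift_lt {l : ZMod 4} {x : Fin (n-1) → ZMod 4} {j : Fin n} (h : (j : ℕ) < n - 1) :
    lift n l x j = x ⟨j, h⟩ := dif_pos h

lemma lift_ge {l : ZMod 4} {x : Fin (n-1) → ZMod 4} {j : Fin n} (h : ¬ (j : ℕ) < n - 1) :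
    lift n l x j = l := dif_neg h

lemma lift_at0 (hn : 2 ≤ n) (l : ZMod 4) (x : Fin (n-1) → ZMod 4) :
    lift n l x 0 = x 0 := by
  have h0 : ((0 : Fin n) : ℕ) = 0 := by simp
  have hlt : ((0 : Fin n) : ℕ) < n - 1 := by omega
  simp only [lift]
  rw [dif_pos hlt]
  congr 1
  all_goals apply Fin.ext
  all_goals simp

lemma lift_last (hn : 2 ≤ n) (l : ZMod 4) (x : Fin (n-1) → ZMod 4) :
    lastCoord n (lift n l x) = l := by
  rw [lastCoord_eq]
  exact lift_ge (by rw [lastN_val hn]; omega)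

lemma lift_inj (l : ZMod 4) {x y : Fin (n-1) → ZMod 4}
    (h : lift n l x = lift n l y) : x = y := by
  funext i
  have hi : (i : ℕ) < n - 1 := i.isLt
  set j : Fin n := ⟨i, Nat.lt_of_lt_of_le hi (Nat.sub_le n 1)⟩ with hj
  have hjlt : (j : ℕ) < n - 1 := hi
  have := congrFun h j
  rw [lift_lt hjlt, lift_lt hjlt] at this
  have hfix : (⟨(j : ℕ), hjlt⟩ : Fin (n-1)) = i := Fin.ext rfl
  rwa [hfix] at this

lemma lift_drop {l : ZMod 4} {v : Fin n → ZMod 4} (h : lastCoord n v = l) :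
    lift n l (drop n v) = v := by
  funext j
  by_cases hj : (j : ℕ) < n - 1
  · rw [lift_lt hj, drop]
  · rw [lift_ge hj, ← h, lastCoord_eq]
    congr 1
    exact Fin.ext (by simp [lastN]; omega)

lemma sigma_lift (hn : 2 ≤ n) (l : ZMod 4) (x : Fin (n-1) → ZMod 4) :
    bhSigma (lift n l x) = bhSigma x := by
  unfold bhSigma
  rw [lift_at0 hn]

lemma val_zero_n (hn : 2 ≤ n) : ((0 : Fin n) : ℕ) = 0 := by simp

/-- The index `i < n-1` viewed inside `Fin n`. -/
def castI {n : ℕ} (i : Fin (n-1)) : Fin n := ⟨i, Nat.lt_of_lt_of_le i.isLt (Nat.sub_le n 1)⟩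

lemma castI_val {i : Fin (n-1)} : ((castI i : Fin n) : ℕ) = (i : ℕ) := rfl

lemma lift_nbr0 (hn : 2 ≤ n) (l : ZMod 4) (x : Fin (n-1) → ZMod 4) (e : ZMod 4) :
    nbr0 (lift n l x) e = lift n l (nbr0 x e) := by
  have h0 : ((0 : Fin n) : ℕ) = 0 := by simp
  have h0' : ((0 : Fin (n-1)) : ℕ) = 0 := by simp
  have h00 : lift n l x 0 = x 0 := lift_at0 hn l x
  funext j
  simp only [nbr0, lift, h00]
  split_ifs
  all_goals try rfl
  all_goals try omega
  all_goals simp_all [Fin.ext_iff]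
  all_goals omega

lemma lift_nbrI (hn : 2 ≤ n) (l : ZMod 4) (x : Fin (n-1) → ZMod 4) (e : ZMod 4)
    {i : Fin (n-1)} (hi : 1 ≤ (i : ℕ)) :
    nbrI (lift n l x) e (castI i) = lift n l (nbrI x e i) := by
  have h0 : ((0 : Fin n) : ℕ) = 0 := by simp
  have h0' : ((0 : Fin (n-1)) : ℕ) = 0 := by simp
  have h00 : lift n l x 0 = x 0 := lift_at0 hn l x
  have hsig := sigma_lift hn l x
  funext j
  simp only [nbrI, lift, castI, h00, hsig]
  split_ifs
  all_goals try rfl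
  all_goals try omega
  · subst_vars
    simp [*]
  · simp only [Fin.ext_iff] at *
    omega

lemma adj_lift (hn : 2 ≤ n) (l : ZMod 4) {x y : Fin (n-1) → ZMod 4} :
    (BH n).Adj (lift n l x) (lift n l y) ↔ (BH (n-1)).Adj x y := by
  rw [adj_iff, adj_iff, bhRel_iff, bhRel_iff]
  constructor
  · rintro ⟨e, he, h | ⟨i, hi1, h⟩⟩
    · rw [lift_nbr0 hn] at h
      exact ⟨e, he, Or.inl (lift_inj l h)⟩
    · by_cases hlt : (i : ℕ) < n - 1
      · have : i = castI (⟨(i : ℕ), hlt⟩ : Fin (n-1)) := Fin.ext rfl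
        rw [this, lift_nbrI hn l x e (by simpa using hi1)] at h
        exact ⟨e, he, Or.inr ⟨⟨(i : ℕ), hlt⟩, by simpa using hi1, lift_inj l h⟩⟩
      · exfalso
        have hil : i = lastN n := Fin.ext (by rw [lastN_val hn]; have := i.isLt; omega)
        subst hil
        have hcl : lastCoord n (lift n l y) = l := lift_last hn l y
        have : lastCoord n (crossN (lift n l x) e) ≠ lastCoord n (lift n l x) :=
          crossN_last_ne hn _ e
        have h' : lift n l y = crossN (lift n l x) e := h
        rw [← h', hcl, lift_last hn l x] at this
        exact this rfl
  · rintro ⟨e, he, h | ⟨i, hi1, h⟩⟩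
    · subst h
      exact ⟨e, he, Or.inl (lift_nbr0 hn l x e).symm⟩
    · subst h
      refine ⟨e, he, Or.inr ⟨castI i, by rw [castI_val]; exact hi1, ?_⟩⟩
      exact (lift_nbrI hn l x e hi1).symm

lemma hr_lift (hn : 2 ≤ n) (l : ZMod 4) {F : Set (Fin n → ZMod 4)}
    {F' : Set (Fin (n-1) → ZMod 4)} (hFF : ∀ z, lift n l z ∈ F ↔ z ∈ F')
    {x y : Fin (n-1) → ZMod 4} (h : HR F' x y) :
    HR F (lift n l x) (lift n l y) := by
  induction h with
  | refl => exact HR.refl _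
  | tail _ h2 ih =>
    exact HR.trans ih (HR.single ((adj_lift hn l).mpr h2.1) (fun hh => h2.2 ((hFF _).mp hh)))

lemma layer_ncard (hn : 2 ≤ n) (l : ZMod 4) :
    {v : Fin n → ZMod 4 | lastCoord n v = l}.ncard = 4 ^ (n - 1) := by
  classical
  have himg : {v : Fin n → ZMod 4 | lastCoord n v = l} = Set.range (lift n l) := by
    ext v
    constructor
    · intro hv
      exact ⟨drop n v, lift_drop hv⟩
    · rintro ⟨x, rfl⟩
      exact lift_last hn l x
  rw [himg, ← Set.image_univ, Set.ncard_image_of_injOn (fun a _ b _ h => lift_inj l h),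
    Set.ncard_univ]
  rw [Nat.card_eq_fintype_card, Fintype.card_fun]
  simp

lemma preimage_ncard (hn : 2 ≤ n) (l : ZMod 4) (F : Set (Fin n → ZMod 4)) :
    {x : Fin (n-1) → ZMod 4 | lift n l x ∈ F}.ncard
      = (F ∩ {v | lastCoord n v = l}).ncard := by
  classical
  have himg : F ∩ {v | lastCoord n v = l} = lift n l '' {x | lift n l x ∈ F} := by
    ext v
    constructor
    · rintro ⟨hvF, hvl⟩
      exact ⟨drop n v, by rw [Set.mem_setOf_eq, lift_drop hvl]; exact hvF, lift_drop hvl⟩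
    · rintro ⟨x, hx, rfl⟩
      exact ⟨hx, lift_last hn l x⟩
  rw [himg, Set.ncard_image_of_injOn (fun a _ b _ h => lift_inj l h)]

end lift
end BHaux
namespace BHaux

lemma two_le_ncard {α : Type*} {F : Set α} {a b : α}
    (ha : a ∈ F) (hb : b ∈ F) (hab : a ≠ b) (hF : F.Finite) : 2 ≤ F.ncard := by
  classical
  have hsub : ({a, b} : Finset α) ⊆ hF.toFinset := by
    intro x hx
    simp only [Finset.mem_insert, Finset.mem_singleton] at hx
    rcases hx with rfl | rfl <;> simp [Set.Finite.mem_toFinset, *]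
  have hcard : ({a, b} : Finset α).card = 2 := by
    rw [Finset.card_insert_of_notMem (by simp [hab]), Finset.card_singleton]
  have := Finset.card_le_card hsub
  rw [hcard] at this
  rwa [Set.ncard_eq_toFinset_card F hF]

/-- Connectivity statement: removing at most `2n-1` vertices leaves `BH n` connected. -/
def ConnP (n : ℕ) [NeZero n] : Prop :=
  ∀ F : Set (Fin n → ZMod 4), F.ncard ≤ 2 * n - 1 →
    ∀ a b, a ∉ F → b ∉ F → HR F a b

lemma fin1_eq (u v : Fin 1 → ZMod 4) (h : u 0 = v 0) : u = v := by
  funext i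
  rw [show i = 0 from Subsingleton.elim i 0]
  exact h

lemma conn1 : ConnP 1 := by
  intro F hF a b ha hb
  have hd : ∀ d : ZMod 4, d = 0 ∨ d = 1 ∨ d = 2 ∨ d = 3 := by decide
  have hstep : ∀ (u : Fin 1 → ZMod 4) (e : ZMod 4), e = 1 ∨ e = 3 →
      (nbr0 u e) ∉ F → HR F u (nbr0 u e) :=
    fun u e he hne => HR.single (adj_nbr0 u he) hne
  rcases hd (b 0 - a 0) with h | h | h | h
  · have : a = b := fin1_eq a b (by
      have : b 0 = a 0 + (b 0 - a 0) := by ring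
      rw [h, add_zero] at this; exact this.symm)
    rw [this]; exact HR.refl b
  · have hb' : b = nbr0 a 1 := fin1_eq b (nbr0 a 1) (by
      rw [nbr0_at0]
      have : b 0 = a 0 + (b 0 - a 0) := by ring
      rw [h] at this; exact this)
    rw [hb']  at hb ⊢
    exact hstep a 1 (Or.inl rfl) hb
  · -- distance two: go through a+1 or a+3
    set m1 := nbr0 a 1 with hm1
    set m3 := nbr0 a 3 with hm3
    have hm13 : m1 ≠ m3 := by
      intro hh
      have := congrFun hh 0
      rw [hm1, hm3, nbr0_at0, nbr0_at0] at this
      have := add_left_cancel this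
      exact absurd this (by decide)
    have hmid : m1 ∉ F ∨ m3 ∉ F := by
      by_contra hc
      push_neg at hc
      have := two_le_ncard hc.1 hc.2 hm13 (Set.toFinite F)
      omega
    have hb1 : b = nbr0 m1 1 := fin1_eq _ _ (by
      rw [nbr0_at0, hm1, nbr0_at0]
      have : b 0 = a 0 + (b 0 - a 0) := by ring
      rw [h] at this
      rw [this]; ring)
    have hb3 : b = nbr0 m3 3 := fin1_eq _ _ (by
      rw [nbr0_at0, hm3, nbr0_at0]
      have h2 : b 0 = a 0 + (b 0 - a 0) := by ring
      rw [h] at h2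
      rw [h2]
      have : (2 : ZMod 4) = 3 + 3 := by decide
      rw [this]; ring)
    rcases hmid with hm | hm
    · refine HR.trans (hstep a 1 (Or.inl rfl) hm) ?_
      rw [hb1] at hb ⊢
      exact hstep m1 1 (Or.inl rfl) hb
    · refine HR.trans (hstep a 3 (Or.inr rfl) hm) ?_
      rw [hb3] at hb ⊢
      exact hstep m3 3 (Or.inr rfl) hb
  · have hb' : b = nbr0 a 3 := fin1_eq b (nbr0 a 3) (by
      rw [nbr0_at0]
      have : b 0 = a 0 + (b 0 - a 0) := by ring
      rw [h] at this; exact this)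
    rw [hb'] at hb ⊢
    exact hstep a 3 (Or.inr rfl) hb

end BHaux
namespace BHaux
section bridge
variable {n : ℕ} [NeZero n]

/-- Modify coordinate 0 to `a` and the last coordinate to `lv`. -/
def mdf (n : ℕ) (x : Fin n → ZMod 4) (a lv : ZMod 4) : Fin n → ZMod 4 :=
  fun j => if (j : ℕ) = 0 then a else if (j : ℕ) = n - 1 then lv else x j

lemma mdf_at0 (x : Fin n → ZMod 4) (a lv : ZMod 4) : mdf n x a lv 0 = a := by
  simp [mdf]

lemma mdf_last (hn : 2 ≤ n) (x : Fin n → ZMod 4) (a lv : ZMod 4) :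
    lastCoord n (mdf n x a lv) = lv := by
  rw [lastCoord_eq]
  have h1 : ((lastN n : Fin n) : ℕ) = n - 1 := rfl
  simp only [mdf, h1]
  rw [if_neg (by omega : ¬ (n-1 = 0))]
  simp

lemma mdf_other (hn : 2 ≤ n) {j : Fin n} (hj : j ≠ 0) (hjl : j ≠ lastN n)
    (x : Fin n → ZMod 4) (a lv : ZMod 4) : mdf n x a lv j = x j := by
  have h1 : (j : ℕ) ≠ 0 := fun hh => hj (val_eq_zero_iff.mp hh)
  have h2 : (j : ℕ) ≠ n - 1 := by
    intro hh
    exact hjl (Fin.ext (by rw [hh]; rfl))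
  simp [mdf, h1, h2]

lemma mdf_eq_of (hn : 2 ≤ n) {l : ZMod 4} {x x' : Fin n → ZMod 4}
    (hx0 : x 0 = 0) (hxl : lastCoord n x = l) (hx'0 : x' 0 = 0) (hx'l : lastCoord n x' = l)
    {a a' lv lv' : ZMod 4} (h : mdf n x a lv = mdf n x' a' lv') : a = a' ∧ x = x' := by
  constructor
  · have := congrFun h 0
    rwa [mdf_at0, mdf_at0] at this
  · funext j
    rcases eq_or_ne j 0 with rfl | hj
    · rw [hx0, hx'0]
    rcases eq_or_ne j (lastN n) with rfl | hjl
    · rw [show x (lastN n) = l from hxl, show x' (lastN n) = l from hx'l]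
    · have := congrFun h j
      rwa [mdf_other hn hj hjl, mdf_other hn hj hjl] at this

lemma zmod4_bridge : ∀ ap aq : ZMod 4, (ap = 0 ∨ ap = 2) → (aq = 1 ∨ aq = 3) →
    (aq - ap = 1 ∨ aq - ap = 3) := by decide

lemma mdf_adj (hn : 2 ≤ n) (x : Fin n → ZMod 4) {ap aq : ZMod 4}
    (hap : ap = 0 ∨ ap = 2) (haq : aq = 1 ∨ aq = 3) (l : ZMod 4) :
    (BH n).Adj (mdf n x ap l) (mdf n x aq (l + 1)) := by
  apply adj_iff.mpr
  have hsig : bhSigma (mdf n x ap l) = 1 := by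
    unfold bhSigma
    rw [mdf_at0]
    exact if_pos hap
  refine ⟨aq - ap, zmod4_bridge ap aq hap haq,
    Or.inr ⟨lastN n, by rw [lastN_val hn]; omega, ?_, ?_, ?_⟩⟩
  · rw [mdf_at0, mdf_at0]; ring
  · have e1 : mdf n x aq (l + 1) (lastN n) = l + 1 := mdf_last hn x aq (l + 1)
    have e2 : mdf n x ap l (lastN n) = l := mdf_last hn x ap l
    rw [e1, e2, hsig]
  · intro j hj hjl
    rw [mdf_other hn hj hjl, mdf_other hn hj hjl]

/-- Injection of middle coordinates into a layer with coordinate 0 equal to 0. -/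
def psiB (n : ℕ) (l : ZMod 4) (y : Fin (n - 2) → ZMod 4) : Fin n → ZMod 4 :=
  fun j => if h0 : (j : ℕ) = 0 then 0
    else if h : (j : ℕ) < n - 1 then y ⟨(j : ℕ) - 1, by omega⟩ else l

lemma psiB_mem (hn : 2 ≤ n) (l : ZMod 4) (y : Fin (n - 2) → ZMod 4) :
    psiB n l y 0 = 0 ∧ lastCoord n (psiB n l y) = l := by
  constructor
  · have h0 : ((0 : Fin n) : ℕ) = 0 := by simp
    simp [psiB, h0]
  · rw [lastCoord_eq]
    have h1 : ((lastN n : Fin n) : ℕ) = n - 1 := rfl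
    simp only [psiB, h1]
    rw [dif_neg (by omega), dif_neg (by omega)]

lemma psiB_inj (hn : 2 ≤ n) (l : ZMod 4) : Function.Injective (psiB n l) := by
  intro y y' h
  funext i
  have hi : (i : ℕ) < n - 2 := i.isLt
  set j : Fin n := ⟨(i : ℕ) + 1, by omega⟩ with hj
  have hj0 : (j : ℕ) ≠ 0 := by simp [hj]
  have hjlt : (j : ℕ) < n - 1 := by simp [hj]; omega
  have := congrFun h j
  simp only [psiB, dif_neg hj0, dif_pos hjlt] at this
  have hfix : (⟨(j : ℕ) - 1, by omega⟩ : Fin (n - 2)) = i := Fin.ext (by simp [hj])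
  rwa [hfix] at this

lemma Xset_ncard (hn : 2 ≤ n) (l : ZMod 4) :
    4 ^ (n - 2) ≤ {x : Fin n → ZMod 4 | x 0 = 0 ∧ lastCoord n x = l}.ncard := by
  classical
  have hsub : psiB n l '' Set.univ ⊆ {x | x 0 = 0 ∧ lastCoord n x = l} := by
    rintro v ⟨y, -, rfl⟩
    exact psiB_mem hn l y
  have h1 : (psiB n l '' Set.univ).ncard = 4 ^ (n - 2) := by
    rw [Set.ncard_image_of_injOn (fun a _ b _ h => psiB_inj hn l h), Set.ncard_univ,
      Nat.card_eq_fintype_card, Fintype.card_fun]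
    simp
  rw [← h1]
  exact Set.ncard_le_ncard hsub (Set.toFinite _)

end bridge
end BHaux
namespace BHaux

/-- The key structure lemma: removing at most `4n-5` vertices leaves a graph
with one big mutually-reachable part plus at most 2 fully-isolated vertices. -/
def LemP (n : ℕ) [NeZero n] : Prop :=
  ∀ F : Set (Fin n → ZMod 4), F.ncard ≤ 4 * n - 5 →
    ∃ S : Set (Fin n → ZMod 4),
      S.ncard ≤ 2 ∧ (∀ u ∈ S, u ∉ F) ∧
      (∀ u ∈ S, ∀ w, (BH n).Adj u w → w ∈ F) ∧
      (∀ a b, a ∉ F → a ∉ S → b ∉ F → b ∉ S → HR F a b)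

lemma conn_of_lemP {n : ℕ} [NeZero n] (hn : 2 ≤ n) (h : LemP n) : ConnP n := by
  intro F hF a b ha hb
  have hF' : F.ncard ≤ 4 * n - 5 := by omega
  obtain ⟨S, hS2, hSF, hSnbr, hreach⟩ := h F hF'
  have hSempty : ∀ s, s ∉ S := by
    intro s hs
    have := deg_lemma (fun w hw => hSnbr s hs w hw)
    omega
  exact hreach a b ha (hSempty a) hb (hSempty b)

lemma zmod4_facts : ∀ d : ZMod 4, d + 1 ≠ d ∧ d + 2 ≠ d ∧ d + 3 ≠ d := by decide

lemma zmod4_cases : ∀ c d : ZMod 4, c ≠ d → c = d + 1 ∨ c = d + 2 ∨ c = d + 3 := by decide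

lemma lemP_step (n : ℕ) [NeZero n] (hn : 2 ≤ n)
    (hconn : @ConnP (n - 1) ⟨by omega⟩)
    (hprev : 3 ≤ n → @LemP (n - 1) ⟨by omega⟩) : LemP n := by
  haveI hNZ : NeZero (n - 1) := ⟨by omega⟩
  intro F hF
  classical
  set Fl : ZMod 4 → Set (Fin n → ZMod 4) := fun l => F ∩ {v | lastCoord n v = l} with hFldef
  obtain ⟨ls, -, hls⟩ := Finset.exists_max_image (Finset.univ : Finset (ZMod 4))
      (fun l => (Fl l).ncard) ⟨0, Finset.mem_univ 0⟩
  -- each other layer is good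
  have hgood : ∀ l, l ≠ ls → (Fl l).ncard ≤ 2 * n - 3 := by
    intro l hl
    by_contra hc
    push_neg at hc
    have h1 : 2 * n - 2 ≤ (Fl l).ncard := by omega
    have h2 : 2 * n - 2 ≤ (Fl ls).ncard := le_trans h1 (hls l (Finset.mem_univ l))
    have hdisj : Disjoint (Fl l) (Fl ls) := by
      refine Set.disjoint_left.mpr ?_
      rintro v ⟨-, hv1⟩ ⟨-, hv2⟩
      have hv1' : lastCoord n v = l := hv1
      have hv2' : lastCoord n v = ls := hv2
      exact hl (hv1' ▸ hv2')
    have hsum : (Fl l).ncard + (Fl ls).ncard ≤ F.ncard := by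
      rw [← Set.ncard_union_eq hdisj (Set.toFinite _) (Set.toFinite _)]
      exact Set.ncard_le_ncard
        (Set.union_subset Set.inter_subset_left Set.inter_subset_left) (Set.toFinite _)
    omega
  -- in-layer reachability in good layers
  have hlayerconn : ∀ l, l ≠ ls → ∀ a b, a ∉ F → b ∉ F →
      lastCoord n a = l → lastCoord n b = l → HR F a b := by
    intro l hl a b haF hbF hal hbl
    set F2 : Set (Fin (n - 1) → ZMod 4) := {x | lift n l x ∈ F} with hF2
    have hcard : F2.ncard ≤ 2 * (n - 1) - 1 := by
      have he : F2.ncard = (F ∩ {v | lastCoord n v = l}).ncard := preimage_ncard hn l F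
      have hg : (Fl l).ncard = (F ∩ {v | lastCoord n v = l}).ncard := rfl
      have := hgood l hl
      omega
    have hra : drop n a ∉ F2 := by
      intro h
      have h' : lift n l (drop n a) ∈ F := h
      rw [lift_drop hal] at h'
      exact haF h'
    have hrb : drop n b ∉ F2 := by
      intro h
      have h' : lift n l (drop n b) ∈ F := h
      rw [lift_drop hbl] at h'
      exact hbF h'
    have hreach := hconn F2 hcard (drop n a) (drop n b) hra hrb
    have := hr_lift hn l (fun z => Iff.rfl) hreach
    rwa [lift_drop hal, lift_drop hbl] at this
  -- bridges between consecutive good layers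
  have hbridge : ∀ l : ZMod 4, l ≠ ls → l + 1 ≠ ls → ∃ p q, p ∉ F ∧ q ∉ F ∧
      lastCoord n p = l ∧ lastCoord n q = l + 1 ∧ (BH n).Adj p q := by
    intro l hl hl1
    set X : Set (Fin n → ZMod 4) := {x | x 0 = 0 ∧ lastCoord n x = l} with hX
    set badE : Set (Fin n → ZMod 4) := {x ∈ X | mdf n x 0 l ∈ F ∧ mdf n x 2 l ∈ F} with hbE
    set badO : Set (Fin n → ZMod 4) :=
      {x ∈ X | mdf n x 1 (l + 1) ∈ F ∧ mdf n x 3 (l + 1) ∈ F} with hbO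
    have hmdf_mem : ∀ x ∈ X, ∀ a lv : ZMod 4, mdf n x a lv ∈ F → mdf n x a lv ∈ Fl lv := by
      intro x hx a lv hmem
      exact ⟨hmem, mdf_last hn x a lv⟩
    -- counting badE
    have hbEcount : 2 * (badE.toFinite.toFinset).card ≤ (Fl l).ncard := by
      apply pair_count (Set.toFinite _) _ (fun x => mdf n x 0 l) (fun x => mdf n x 2 l)
      · intro x hx
        have hx' := (Set.Finite.mem_toFinset _).mp hx
        exact ⟨hmdf_mem x hx'.1 0 l hx'.2.1, hmdf_mem x hx'.1 2 l hx'.2.2⟩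
      · intro x hx
        intro h
        have := (mdf_eq_of hn ((Set.Finite.mem_toFinset _).mp hx).1.1
          ((Set.Finite.mem_toFinset _).mp hx).1.2 ((Set.Finite.mem_toFinset _).mp hx).1.1
          ((Set.Finite.mem_toFinset _).mp hx).1.2 h).1
        exact absurd this (by decide)
      · intro x hx y hy hxy
        have hxX := ((Set.Finite.mem_toFinset _).mp hx).1
        have hyX := ((Set.Finite.mem_toFinset _).mp hy).1
        refine ⟨?_, ?_, ?_, ?_⟩ <;> intro h <;>
          [ (exact hxy (mdf_eq_of hn hxX.1 hxX.2 hyX.1 hyX.2 h).2);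
            (exact hxy (mdf_eq_of hn hxX.1 hxX.2 hyX.1 hyX.2 h).2);
            (exact hxy (mdf_eq_of hn hxX.1 hxX.2 hyX.1 hyX.2 h).2);
            (exact hxy (mdf_eq_of hn hxX.1 hxX.2 hyX.1 hyX.2 h).2)]
    have hbOcount : 2 * (badO.toFinite.toFinset).card ≤ (Fl (l + 1)).ncard := by
      apply pair_count (Set.toFinite _) _ (fun x => mdf n x 1 (l+1)) (fun x => mdf n x 3 (l+1))
      · intro x hx
        have hx' := (Set.Finite.mem_toFinset _).mp hx
        exact ⟨hmdf_mem x hx'.1 1 (l+1) hx'.2.1, hmdf_mem x hx'.1 3 (l+1) hx'.2.2⟩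
      · intro x hx
        intro h
        have := (mdf_eq_of hn ((Set.Finite.mem_toFinset _).mp hx).1.1
          ((Set.Finite.mem_toFinset _).mp hx).1.2 ((Set.Finite.mem_toFinset _).mp hx).1.1
          ((Set.Finite.mem_toFinset _).mp hx).1.2 h).1
        exact absurd this (by decide)
      · intro x hx y hy hxy
        have hxX := ((Set.Finite.mem_toFinset _).mp hx).1
        have hyX := ((Set.Finite.mem_toFinset _).mp hy).1
        refine ⟨?_, ?_, ?_, ?_⟩ <;> intro h <;>
          [ (exact hxy (mdf_eq_of hn hxX.1 hxX.2 hyX.1 hyX.2 h).2);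
            (exact hxy (mdf_eq_of hn hxX.1 hxX.2 hyX.1 hyX.2 h).2);
            (exact hxy (mdf_eq_of hn hxX.1 hxX.2 hyX.1 hyX.2 h).2);
            (exact hxy (mdf_eq_of hn hxX.1 hxX.2 hyX.1 hyX.2 h).2)]
    have hbEn : badE.ncard ≤ n - 2 := by
      rw [Set.ncard_eq_toFinset_card badE badE.toFinite]
      have := hgood l hl
      omega
    have hbOn : badO.ncard ≤ n - 2 := by
      rw [Set.ncard_eq_toFinset_card badO badO.toFinite]
      have := hgood (l + 1) hl1
      omega
    have hXn : 4 ^ (n - 2) ≤ X.ncard := by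
      rw [hX]
      exact Xset_ncard hn l
    have hpow := pow_lemma3 (n - 2)
    have hexist : ∃ x, x ∈ X ∧ x ∉ badE ∧ x ∉ badO := by
      by_contra hc
      push_neg at hc
      have hsub : X ⊆ badE ∪ badO := by
        intro x hx
        rcases Classical.em (x ∈ badE) with h | h
        · exact Or.inl h
        · exact Or.inr (hc x hx h)
      have h1 : X.ncard ≤ badE.ncard + badO.ncard :=
        le_trans (Set.ncard_le_ncard hsub (Set.toFinite _)) (Set.ncard_union_le _ _)
      omega
    obtain ⟨x, hxX, hxE, hxO⟩ := hexist
    have hpE : mdf n x 0 l ∉ F ∨ mdf n x 2 l ∉ F := by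
      by_contra hc
      push_neg at hc
      exact hxE ⟨hxX, hc⟩
    have hpO : mdf n x 1 (l+1) ∉ F ∨ mdf n x 3 (l+1) ∉ F := by
      by_contra hc
      push_neg at hc
      exact hxO ⟨hxX, hc⟩
    have key : ∀ ap aq : ZMod 4, (ap = 0 ∨ ap = 2) → (aq = 1 ∨ aq = 3) →
        mdf n x ap l ∉ F → mdf n x aq (l+1) ∉ F →
        ∃ p q, p ∉ F ∧ q ∉ F ∧ lastCoord n p = l ∧ lastCoord n q = l + 1 ∧ (BH n).Adj p q :=
      fun ap aq hap haq hp hq =>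
        ⟨mdf n x ap l, mdf n x aq (l+1), hp, hq, mdf_last hn x ap l, mdf_last hn x aq (l+1),
          mdf_adj hn x hap haq l⟩
    rcases hpE with hp | hp <;> rcases hpO with hq | hq
    · exact key 0 1 (Or.inl rfl) (Or.inl rfl) hp hq
    · exact key 0 3 (Or.inl rfl) (Or.inr rfl) hp hq
    · exact key 2 1 (Or.inr rfl) (Or.inl rfl) hp hq
    · exact key 2 3 (Or.inr rfl) (Or.inr rfl) hp hq
  -- anchor vertex in layer ls+2
  have hanchor : ∃ g, g ∉ F ∧ lastCoord n g = ls + 2 := by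
    have hlay := layer_ncard hn (ls + 2)
    by_contra hc
    push_neg at hc
    have hsub : {v | lastCoord n v = ls + 2} ⊆ F := by
      intro v hv
      by_contra hvF
      exact (hc v hvF) hv
    have hle := Set.ncard_le_ncard hsub (Set.toFinite _)
    rw [hlay] at hle
    have hpow := pow_lemma1 (n - 2)
    have hn1 : n - 2 + 1 = n - 1 := by omega
    rw [hn1] at hpow
    omega
  obtain ⟨g0, hg0F, hg0l⟩ := hanchor
  -- every good vertex reaches the anchor
  have hreach_anchor : ∀ a, a ∉ F → lastCoord n a ≠ ls → HR F a g0 := by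
    intro a haF hal
    have hne1 : ls + 1 ≠ ls := (zmod4_facts ls).1
    have hne2 : ls + 2 ≠ ls := (zmod4_facts ls).2.1
    have hne3 : ls + 3 ≠ ls := (zmod4_facts ls).2.2
    have hsum11 : ls + 1 + 1 = ls + 2 := by ring
    have hsum21 : ls + 2 + 1 = ls + 3 := by ring
    rcases zmod4_cases _ _ hal with h1 | h2 | h3
    · obtain ⟨p, q, hpF, hqF, hpl, hql, hadj⟩ := hbridge (ls + 1) hne1 (by rw [hsum11]; exact hne2)
      rw [hsum11] at hql
      exact HR.trans (hlayerconn (ls + 1) hne1 a p haF hpF h1 hpl)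
        (HR.trans (HR.single hadj hqF)
          (hlayerconn (ls + 2) hne2 q g0 hqF hg0F hql hg0l))
    · exact hlayerconn (ls + 2) hne2 a g0 haF hg0F h2 hg0l
    · obtain ⟨p, q, hpF, hqF, hpl, hql, hadj⟩ := hbridge (ls + 2) hne2 (by rw [hsum21]; exact hne3)
      rw [hsum21] at hql
      exact HR.trans (hlayerconn (ls + 3) hne3 a q haF hqF h3 hql)
        (HR.trans (HR.single hadj.symm hpF)
          (hlayerconn (ls + 2) hne2 p g0 hpF hg0F hpl hg0l))
  have hgoodreach : ∀ a b, a ∉ F → b ∉ F → lastCoord n a ≠ ls → lastCoord n b ≠ ls →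
      HR F a b := by
    intro a b haF hbF hal hbl
    exact HR.trans (hreach_anchor a haF hal) (HR.symm hbF (hreach_anchor b hbF hbl))
  -- the potentially-stranded set T
  set T : Set (Fin n → ZMod 4) :=
    {v | v ∉ F ∧ lastCoord n v = ls ∧ ¬ ∃ g, g ∉ F ∧ lastCoord n g ≠ ls ∧ HR F v g}
    with hTdef
  have hTnotF : ∀ u ∈ T, u ∉ F := fun u hu => hu.1
  have hTlast : ∀ u ∈ T, lastCoord n u = ls := fun u hu => hu.2.1
  have hTcross : ∀ u ∈ T, ∀ e : ZMod 4, (e = 1 ∨ e = 3) → crossN u e ∈ F := by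
    intro u hu e he
    by_contra hc
    refine hu.2.2 ⟨crossN u e, hc, ?_, HR.single (adj_crossN hn u he) hc⟩
    rw [← hTlast u hu]
    exact crossN_last_ne hn u e
  have hTclosed : ∀ u ∈ T, ∀ w, (BH n).Adj u w → w ∉ F → w ∈ T := by
    intro u hu w haw hwF
    by_cases hwl : lastCoord n w = ls
    · refine ⟨hwF, hwl, ?_⟩
      rintro ⟨g, hgF, hgl, hr⟩
      exact hu.2.2 ⟨g, hgF, hgl, HR.trans (HR.single haw hwF) hr⟩
    · exact absurd ⟨w, hwF, hwl, HR.single haw hwF⟩ hu.2.2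
  have hreach_out : ∀ a, a ∉ F → a ∉ T → ∃ g, g ∉ F ∧ lastCoord n g ≠ ls ∧ HR F a g := by
    intro a haF haT
    by_cases hal : lastCoord n a = ls
    · by_contra hc
      exact haT ⟨haF, hal, hc⟩
    · exact ⟨a, haF, hal, HR.refl a⟩
  have hfinalreach : ∀ a b, a ∉ F → a ∉ T → b ∉ F → b ∉ T → HR F a b := by
    intro a b haF haT hbF hbT
    obtain ⟨ga, hgaF, hgal, hra⟩ := hreach_out a haF haT
    obtain ⟨gb, hgbF, hgbl, hrb⟩ := hreach_out b hbF hbT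
    exact HR.trans hra (HR.trans (hgoodreach ga gb hgaF hgbF hgal hgbl) (HR.symm hbF hrb))
  -- T is closed: neighbours of T are in F or T
  have hTnbr_all : (∀ u ∈ T, ∀ v ∈ T, v = u ∨ v = twin u) →
      ∀ u ∈ T, ∀ w, (BH n).Adj u w → w ∈ F := by
    intro hpair u hu w haw
    by_contra hwF
    have hwT := hTclosed u hu w haw hwF
    rcases hpair u hu w hwT with rfl | rfl
    · exact (BH n).ne_of_adj haw rfl
    · exact twin_not_adj u haw
  rcases le_or_gt ((F \ {v | lastCoord n v = ls}).ncard) 3 with hsmall | hbig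
  · -- CASE B : few deleted vertices outside layer ls
    have hTpair : ∀ u ∈ T, ∀ v ∈ T, v = u ∨ v = twin u := by
      intro u hu v hv
      by_contra hc
      push_neg at hc
      obtain ⟨hvu, hvtw⟩ := hc
      have hlay : ∀ w ∈ T, ∀ e : ZMod 4, (e = 1 ∨ e = 3) →
          crossN w e ∈ F \ {v | lastCoord n v = ls} := by
        intro w hw e he
        refine ⟨hTcross w hw e he, ?_⟩
        intro hmem
        have hmem' : lastCoord n (crossN w e) = ls := hmem
        rw [← hTlast w hw] at hmem'
        exact crossN_last_ne hn w e hmem'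
      have hluv : lastCoord n u = lastCoord n v := by rw [hTlast u hu, hTlast v hv]
      have hcc : ∀ (e e' : ZMod 4), (e = 1 ∨ e = 3) → (e' = 1 ∨ e' = 3) →
          crossN u e ≠ crossN v e' := by
        intro e e' he he' h
        rcases crossN_eq_cases hn he he' hluv h with h1 | h1
        · exact hvu h1
        · exact hvtw h1
      have hself : ∀ (w : Fin n → ZMod 4), crossN w 1 ≠ crossN w 3 := by
        intro w h
        have := congrFun h 0
        rw [crossN_at0, crossN_at0] at this
        exact absurd (add_left_cancel this) (by decide)
      have h4 : 4 ≤ (F \ {v | lastCoord n v = ls}).ncard :=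
        four_le_ncard (hlay u hu 1 (Or.inl rfl)) (hlay u hu 3 (Or.inr rfl))
          (hlay v hv 1 (Or.inl rfl)) (hlay v hv 3 (Or.inr rfl))
          (hself u) (hcc 1 1 (Or.inl rfl) (Or.inl rfl)) (hcc 1 3 (Or.inl rfl) (Or.inr rfl))
          (hcc 3 1 (Or.inr rfl) (Or.inl rfl)) (hcc 3 3 (Or.inr rfl) (Or.inr rfl)) (hself v)
          (Set.toFinite _)
      omega
    refine ⟨T, ?_, hTnotF, hTnbr_all hTpair, hfinalreach⟩
    rcases Set.eq_empty_or_nonempty T with hTe | ⟨u, hu⟩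
    · simp [hTe]
    · have hsub : T ⊆ {u, twin u} := by
        intro v hv
        rcases hTpair u hu v hv with rfl | rfl <;> simp
      calc T.ncard ≤ ({u, twin u} : Set _).ncard :=
            Set.ncard_le_ncard hsub (Set.toFinite _)
        _ ≤ 2 := by
            apply le_trans (Set.ncard_insert_le u {twin u})
            simp
  · -- CASE A : apply the induction hypothesis inside layer ls
    have hn3 : 3 ≤ n := by
      have h1 : (F \ {v | lastCoord n v = ls}).ncard ≤ F.ncard :=
        Set.ncard_le_ncard Set.diff_subset (Set.toFinite _)
      omega
    have hsplit := ncard_split F {v | lastCoord n v = ls}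
    have hFlls : (Fl ls).ncard = (F ∩ {v | lastCoord n v = ls}).ncard := rfl
    have hFls : (Fl ls).ncard ≤ 4 * (n - 1) - 5 := by
      rw [hFlls]
      omega
    set F' : Set (Fin (n - 1) → ZMod 4) := {x | lift n ls x ∈ F} with hF'def
    have hF'card : F'.ncard ≤ 4 * (n - 1) - 5 := by
      rw [hF'def]
      have := preimage_ncard hn ls F
      rw [this]
      exact hFls
    obtain ⟨S', hS'2, hS'F, hS'nbr, hS'reach⟩ := hprev hn3 F' hF'card
    have hTsub : T ⊆ (lift n ls) '' S' := by
      intro u hu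
      by_contra huS
      have hul : lastCoord n u = ls := hTlast u hu
      have hux : lift n ls (drop n u) = u := lift_drop hul
      have hxS' : drop n u ∉ S' := fun h => huS ⟨drop n u, h, hux⟩
      have hxF' : drop n u ∉ F' := by
        intro h
        have h' : lift n ls (drop n u) ∈ F := h
        rw [hux] at h'
        exact hu.1 h'
      have hYex : ∃ y, y ∉ F' ∧ y ∉ S' ∧
          (crossN (lift n ls y) 1 ∉ F ∨ crossN (lift n ls y) 3 ∉ F) := by
        by_contra hcY
        push_neg at hcY
        set W : Set (Fin n → ZMod 4) :=
          {w | lastCoord n w = ls ∧ w ∉ F ∧ w ∉ lift n ls '' S'} with hWdef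
        have hWin : ∀ w ∈ W, crossN w 1 ∈ F \ {v | lastCoord n v = ls} := by
          intro w hw
          obtain ⟨hwl, hwF, hwS⟩ := hw
          have hy1 : drop n w ∉ F' := by
            intro h
            have h' : lift n ls (drop n w) ∈ F := h
            rw [lift_drop hwl] at h'
            exact hwF h'
          have hy2 : drop n w ∉ S' := by
            intro h
            exact hwS ⟨drop n w, h, lift_drop hwl⟩
          have hcw := (hcY (drop n w) hy1 hy2).1
          rw [lift_drop hwl] at hcw
          refine ⟨hcw, ?_⟩
          intro hmem
          have hmem' : lastCoord n (crossN w 1) = ls := hmem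
          rw [← hwl] at hmem'
          exact crossN_last_ne hn w 1 hmem'
        have hinj : Set.InjOn (fun w => crossN w 1) W := by
          intro w hw w' hw' h
          have hl : lastCoord n w = lastCoord n w' := by rw [hw.1, hw'.1]
          rcases crossN_eq_cases hn (Or.inl rfl) (Or.inl rfl) hl h with h1 | h1
          · exact h1.symm
          · exfalso
            have h0 : crossN w 1 0 = crossN w' 1 0 := congrFun h 0
            rw [crossN_at0, crossN_at0] at h0
            have hww : w 0 = w' 0 := add_right_cancel h0
            rw [h1, twin_at0] at hww
            have h2 : w 0 + 0 = w 0 + 2 := by rw [add_zero]; exact hww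
            exact absurd (add_left_cancel h2) (by decide)
        have hWcount : W.ncard ≤ (F \ {v | lastCoord n v = ls}).ncard := by
          calc W.ncard = ((fun w => crossN w 1) '' W).ncard :=
                (Set.ncard_image_of_injOn hinj).symm
            _ ≤ _ := Set.ncard_le_ncard (by
                rintro z ⟨w, hw, rfl⟩
                exact hWin w hw) (Set.toFinite _)
        have hcover : {v : Fin n → ZMod 4 | lastCoord n v = ls} ⊆
            (W ∪ (F ∩ {v | lastCoord n v = ls})) ∪ (lift n ls '' S') := by
          intro v hv
          have hvl : lastCoord n v = ls := hv
          by_cases hvF : v ∈ F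
          · exact Or.inl (Or.inr ⟨hvF, hvl⟩)
          by_cases hvS : v ∈ lift n ls '' S'
          · exact Or.inr hvS
          · exact Or.inl (Or.inl ⟨hvl, hvF, hvS⟩)
        have hlaycard : ({v : Fin n → ZMod 4 | lastCoord n v = ls}).ncard ≤
            W.ncard + (F ∩ {v | lastCoord n v = ls}).ncard + (lift n ls '' S').ncard := by
          refine le_trans (Set.ncard_le_ncard hcover (Set.toFinite _)) ?_
          refine le_trans (Set.ncard_union_le _ _) ?_
          have := Set.ncard_union_le W (F ∩ {v | lastCoord n v = ls})
          omega
        have himgcard : (lift n ls '' S').ncard ≤ 2 := by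
          rw [Set.ncard_image_of_injOn (fun a _ b _ h => lift_inj ls h)]
          exact hS'2
        rw [layer_ncard hn ls] at hlaycard
        have hpow := pow_lemma2 (n - 2) (by omega)
        have hn1 : n - 2 + 1 = n - 1 := by omega
        rw [hn1] at hpow
        omega
      obtain ⟨y, hyF', hyS', hycr⟩ := hYex
      have hreach' := hS'reach (drop n u) y hxF' hxS' hyF' hyS'
      have hlifted : HR F u (lift n ls y) := by
        have := hr_lift hn ls (fun z => Iff.rfl) hreach'
        rwa [hux] at this
      have hcrossne : ∀ e : ZMod 4, lastCoord n (crossN (lift n ls y) e) ≠ ls := by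
        intro e h
        have hq := crossN_last_ne hn (lift n ls y) e
        rw [lift_last hn ls y] at hq
        exact hq h
      rcases hycr with hcr | hcr
      · exact hu.2.2 ⟨crossN (lift n ls y) 1, hcr, hcrossne 1,
          HR.trans hlifted (HR.single (adj_crossN hn _ (Or.inl rfl)) hcr)⟩
      · exact hu.2.2 ⟨crossN (lift n ls y) 3, hcr, hcrossne 3,
          HR.trans hlifted (HR.single (adj_crossN hn _ (Or.inr rfl)) hcr)⟩
    refine ⟨T, ?_, hTnotF, ?_, hfinalreach⟩
    · calc T.ncard ≤ ((lift n ls) '' S').ncard :=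
            Set.ncard_le_ncard hTsub (Set.toFinite _)
        _ = S'.ncard := Set.ncard_image_of_injOn (fun a _ b _ h => lift_inj ls h)
        _ ≤ 2 := hS'2
    · intro u hu w haw
      by_contra hwF
      have hwT := hTclosed u hu w haw hwF
      obtain ⟨x, hxS', hxu⟩ := hTsub hu
      obtain ⟨x', hx'S', hx'w⟩ := hTsub hwT
      rw [← hxu, ← hx'w] at haw
      have hadj' : (BH (n - 1)).Adj x x' := (adj_lift hn ls).mp haw
      have := hS'nbr x hxS' x' hadj'
      rw [hF'def] at this
      rw [← hx'w] at hwF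
      exact hwF this

lemma lemP_all : ∀ n, 2 ≤ n → ∀ (_ : NeZero n), LemP n := by
  refine Nat.le_induction ?_ ?_
  · intro _
    exact lemP_step 2 (by norm_num) conn1 (fun h => absurd h (by omega))
  · intro n hn ih _
    haveI : NeZero n := ⟨by omega⟩
    haveI : NeZero (n + 1 - 1) := ⟨by omega⟩
    have hLn : LemP n := ih ‹NeZero n›
    exact lemP_step (n + 1) (by omega)
      (conn_of_lemP hn hLn) (fun _ => hLn)

end BHaux
namespace BHaux
section upper
variable {n : ℕ} [NeZero n]

/-- The central 4-cycle along dimension 0. -/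
def cyc (n : ℕ) (a : ZMod 4) : Fin n → ZMod 4 :=
  fun j => if (j : ℕ) = 0 then a else 0

/-- The tag of the deleted vertices. -/
def ftag (a : ZMod 4) : ZMod 4 := if a = 1 ∨ a = 3 then 1 else 3

/-- The deleted vertices. -/
def fvert (n : ℕ) (a : ZMod 4) (i : Fin n) : Fin n → ZMod 4 :=
  fun j => if (j : ℕ) = 0 then a else if j = i then ftag a else 0

/-- The deleted set: the neighbourhood of the central 4-cycle. -/
def Fdel (n : ℕ) : Set (Fin n → ZMod 4) :=
  {v | ∃ (a : ZMod 4) (i : Fin n), 1 ≤ (i : ℕ) ∧ v = fvert n a i}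

def Cset (n : ℕ) : Set (Fin n → ZMod 4) := {v | ∃ a, v = cyc n a}

lemma cyc_at0 (a : ZMod 4) : cyc n a 0 = a := by simp [cyc]

lemma cyc_ne {j : Fin n} (hj : j ≠ 0) (a : ZMod 4) : cyc n a j = 0 := by
  have h' : (j : ℕ) ≠ 0 := fun hh => hj (val_eq_zero_iff.mp hh)
  simp [cyc, h']

lemma fvert_at0 (a : ZMod 4) (i : Fin n) : fvert n a i 0 = a := by simp [fvert]

lemma fvert_atI {i : Fin n} (hi : i ≠ 0) (a : ZMod 4) : fvert n a i i = ftag a := by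
  have h' : (i : ℕ) ≠ 0 := fun hh => hi (val_eq_zero_iff.mp hh)
  simp [fvert, h']

lemma fvert_other {i j : Fin n} (hj : j ≠ 0) (hji : j ≠ i) (a : ZMod 4) :
    fvert n a i j = 0 := by
  have h' : (j : ℕ) ≠ 0 := fun hh => hj (val_eq_zero_iff.mp hh)
  simp [fvert, h', hji]

lemma ftag_vals (a : ZMod 4) : ftag a = 1 ∨ ftag a = 3 := by
  unfold ftag; split <;> simp

lemma fvert_vals {j : Fin n} (hj : j ≠ 0) (a : ZMod 4) (i : Fin n) :
    fvert n a i j = 0 ∨ fvert n a i j = 1 ∨ fvert n a i j = 3 := by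
  rcases eq_or_ne j i with rfl | hji
  · rcases ftag_vals a with h | h <;> rw [fvert_atI hj] <;> [exact Or.inr (Or.inl h);
      exact Or.inr (Or.inr h)]
  · rw [fvert_other hj hji]; exact Or.inl rfl

lemma cyc_not_mem_Fdel (a : ZMod 4) : cyc n a ∉ Fdel n := by
  rintro ⟨b, i, hi1, h⟩
  have hi : i ≠ 0 := fun hh => by rw [hh] at hi1; simp at hi1
  have := congrFun h i
  rw [cyc_ne hi, fvert_atI hi] at this
  rcases ftag_vals b with ht | ht <;> rw [ht] at this <;> exact absurd this.symm (by decide)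

/-- `bhSigma` of a vertex coincides with the tag of its dimension-0 neighbours. -/
lemma sigma_ftag (b e : ZMod 4) (he : e = 1 ∨ e = 3) :
    ftag (b + e) = (if b = 0 ∨ b = 2 then (1 : ZMod 4) else 3) := by
  revert he; revert b e; unfold ftag; decide

lemma sigma_cyc (a : ZMod 4) : bhSigma (cyc n a) = if a = 0 ∨ a = 2 then 1 else 3 := by
  unfold bhSigma
  rw [cyc_at0]

/-- The closure property: neighbours of the cycle are in the cycle or deleted. -/
lemma cyc_closure {a : ZMod 4} {w : Fin n → ZMod 4} (h : (BH n).Adj (cyc n a) w) :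
    w ∈ Cset n ∨ w ∈ Fdel n := by
  rcases bhRel_iff.mp (adj_iff.mp h) with ⟨e, he, rfl | ⟨i, hi1, rfl⟩⟩
  · left
    refine ⟨a + e, ?_⟩
    funext j
    rcases eq_or_ne j 0 with rfl | hj
    · rw [nbr0_at0, cyc_at0, cyc_at0]
    · rw [nbr0_ne hj, cyc_ne hj, cyc_ne hj]
  · right
    have hi : i ≠ 0 := fun hh => by rw [hh] at hi1; simp at hi1
    refine ⟨a + e, i, hi1, ?_⟩
    funext j
    rcases eq_or_ne j 0 with rfl | hj
    · rw [nbrI_at0, cyc_at0, fvert_at0]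
    rcases eq_or_ne j i with rfl | hji
    · rw [nbrI_atI hi, fvert_atI hi, cyc_ne hi, sigma_cyc, sigma_ftag a e he, zero_add]
    · rw [nbrI_other hj hji, cyc_ne hj, fvert_other hj hji]

/-- membership of the exceptional shape. -/
def Eshape (n : ℕ) [NeZero n] (v : Fin n → ZMod 4) : Prop :=
  ∃ i : Fin n, 1 ≤ (i : ℕ) ∧ v i = bhSigma v ∧ ∀ j, j ≠ 0 → j ≠ i → v j = 0

lemma sigma_sum (s : ZMod 4) (hs : s = 1 ∨ s = 3) : s + s = 2 := by
  rcases hs with rfl | rfl <;> decide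

/-- Every non-deleted vertex has two distinct non-deleted neighbours. -/
lemma min_degree (hn : 2 ≤ n) (v : Fin n → ZMod 4) (hv : v ∉ Fdel n) :
    ∃ w1 w2, w1 ≠ w2 ∧ (BH n).Adj v w1 ∧ (BH n).Adj v w2 ∧ w1 ∉ Fdel n ∧ w2 ∉ Fdel n := by
  have hne13 : ∀ u : Fin n → ZMod 4, nbr0 u 1 ≠ nbr0 u 3 := by
    intro u h
    have := congrFun h 0
    rw [nbr0_at0, nbr0_at0] at this
    exact absurd (add_left_cancel this) (by decide)
  by_cases hC : v ∈ Cset n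
  · obtain ⟨a, rfl⟩ := hC
    have hmem : ∀ e : ZMod 4, (e = 1 ∨ e = 3) → nbr0 (cyc n a) e ∉ Fdel n := by
      intro e he hmem
      have : nbr0 (cyc n a) e = cyc n (a + e) := by
        funext j
        rcases eq_or_ne j 0 with rfl | hj
        · rw [nbr0_at0, cyc_at0, cyc_at0]
        · rw [nbr0_ne hj, cyc_ne hj, cyc_ne hj]
      rw [this] at hmem
      exact cyc_not_mem_Fdel (a + e) hmem
    exact ⟨nbr0 (cyc n a) 1, nbr0 (cyc n a) 3, hne13 _,
      adj_nbr0 _ (Or.inl rfl), adj_nbr0 _ (Or.inr rfl),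
      hmem 1 (Or.inl rfl), hmem 3 (Or.inr rfl)⟩
  by_cases hE : Eshape n v
  · obtain ⟨i, hi1, hvi, hvz⟩ := hE
    have hi : i ≠ 0 := fun hh => by rw [hh] at hi1; simp at hi1
    have hval : ∀ e : ZMod 4, nbrI v e i i = 2 := by
      intro e
      rw [nbrI_atI hi, hvi, sigma_sum _ (sigma_cases v)]
    have hmem : ∀ e : ZMod 4, nbrI v e i ∉ Fdel n := by
      rintro e ⟨b, i', hi'1, hfe⟩
      have := congrFun hfe i
      rw [hval e] at this
      rcases fvert_vals hi b i' with h | h | h <;> rw [h] at this <;>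
        exact absurd this (by decide)
    have hne : nbrI v 1 i ≠ nbrI v 3 i := by
      intro h
      have := congrFun h 0
      rw [nbrI_at0, nbrI_at0] at this
      exact absurd (add_left_cancel this) (by decide)
    exact ⟨nbrI v 1 i, nbrI v 3 i, hne,
      adj_nbrI v (Or.inl rfl) hi1, adj_nbrI v (Or.inr rfl) hi1,
      hmem 1, hmem 3⟩
  · have hmem : ∀ e : ZMod 4, (e = 1 ∨ e = 3) → nbr0 v e ∉ Fdel n := by
      rintro e he ⟨b, i', hi'1, hfe⟩
      have hi' : i' ≠ 0 := fun hh => by rw [hh] at hi'1; simp at hi'1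
      apply hE
      refine ⟨i', hi'1, ?_, ?_⟩
      · have h1 := congrFun hfe i'
        rw [nbr0_ne hi', fvert_atI hi'] at h1
        have h2 := congrFun hfe 0
        rw [nbr0_at0, fvert_at0] at h2
        rw [h1, ← h2]
        unfold bhSigma
        exact sigma_ftag (v 0) e he
      · intro j hj hji
        have := congrFun hfe j
        rwa [nbr0_ne hj, fvert_other hj hji] at this
    exact ⟨nbr0 v 1, nbr0 v 3, hne13 v,
      adj_nbr0 v (Or.inl rfl), adj_nbr0 v (Or.inr rfl),
      hmem 1 (Or.inl rfl), hmem 3 (Or.inr rfl)⟩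

end upper
end BHaux
namespace BHaux
section final
variable {n : ℕ} [NeZero n]

lemma Fdel_ncard (hn : 2 ≤ n) : (Fdel n).ncard = 4 * n - 4 := by
  classical
  set g : ZMod 4 × {i : Fin n // 1 ≤ (i : ℕ)} → (Fin n → ZMod 4) :=
    fun p => fvert n p.1 p.2.1 with hg
  have hrange : Fdel n = Set.range g := by
    ext v
    constructor
    · rintro ⟨a, i, hi1, rfl⟩
      exact ⟨(a, ⟨i, hi1⟩), rfl⟩
    · rintro ⟨⟨a, i⟩, rfl⟩
      exact ⟨a, i.1, i.2, rfl⟩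
  have hinj : Function.Injective g := by
    rintro ⟨a, i⟩ ⟨a', i'⟩ h
    simp only [hg] at h
    have ha : a = a' := by
      have := congrFun h 0
      rwa [fvert_at0, fvert_at0] at this
    subst ha
    have hii : i.1 = i'.1 := by
      by_contra hii
      have hi0 : i.1 ≠ 0 := fun hh => by have := i.2; rw [hh] at this; simp at this
      have := congrFun h i.1
      rw [fvert_atI hi0, fvert_other hi0 hii] at this
      rcases ftag_vals a with ht | ht <;> rw [ht] at this <;> exact absurd this (by decide)
    have : i = i' := Subtype.ext hii
    rw [this]
  have hcardsub : Fintype.card {i : Fin n // 1 ≤ (i : ℕ)} = n - 1 := by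
    have he : {i : Fin n // 1 ≤ (i : ℕ)} ≃ {i : Fin n // ¬ (i = 0)} :=
      Equiv.subtypeEquivRight (by
        intro i
        rw [← val_eq_zero_iff]
        omega)
    rw [Fintype.card_congr he, Fintype.card_subtype_compl, Fintype.card_subtype_eq,
      Fintype.card_fin]
  rw [hrange, ← Set.image_univ, Set.ncard_image_of_injOn (fun a _ b _ h => hinj h),
    Set.ncard_univ, Nat.card_eq_fintype_card, Fintype.card_prod, hcardsub]
  have : Fintype.card (ZMod 4) = 4 := rfl
  rw [this]
  omega

def wvert (n : ℕ) : Fin n → ZMod 4 := fun j => if (j : ℕ) = 1 then 2 else 0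

lemma wvert_not_F : wvert n ∉ Fdel n := by
  rintro ⟨a, i, hi1, h⟩
  have hi0 : i ≠ 0 := fun hh => by rw [hh] at hi1; simp at hi1
  have := congrFun h i
  rw [fvert_atI hi0] at this
  have hval : wvert n i = 2 ∨ wvert n i = 0 := by
    unfold wvert
    split <;> simp
  rcases hval with hv | hv <;> rw [hv] at this <;> rcases ftag_vals a with ht | ht <;>
    rw [ht] at this <;> exact absurd this (by decide)

lemma wvert_not_C (hn : 2 ≤ n) : wvert n ∉ Cset n := by
  rintro ⟨a, h⟩
  set one : Fin n := ⟨1, by omega⟩ with hone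
  have h1 : (one : ℕ) = 1 := rfl
  have hne : one ≠ 0 := by
    intro hh
    have := congrArg Fin.val hh
    rw [h1] at this
    simp at this
  have := congrFun h one
  rw [cyc_ne hne] at this
  have hwv : wvert n one = 2 := by simp [wvert, h1]
  rw [hwv] at this
  exact absurd this (by decide)

lemma not_conn (hn : 2 ≤ n) : ¬ ((BH n).induce (Fdel n)ᶜ).Connected := by
  intro h
  have hcyc0 : cyc n 0 ∈ (Fdel n)ᶜ := cyc_not_mem_Fdel 0
  have hwv : wvert n ∈ (Fdel n)ᶜ := wvert_not_F
  have hreach := h.preconnected ⟨cyc n 0, hcyc0⟩ ⟨wvert n, hwv⟩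
  obtain ⟨p⟩ := hreach
  have hstay : ∀ (x y : ↥(Fdel n)ᶜ) (_ : ((BH n).induce (Fdel n)ᶜ).Walk x y),
      ↑x ∈ Cset n → ↑y ∈ Cset n := by
    intro x y w
    induction w with
    | nil => exact id
    | @cons u b c hadj p ih =>
      intro hx
      apply ih
      have hbadj : (BH n).Adj ↑u ↑b := hadj
      obtain ⟨a, hxa⟩ := hx
      rw [hxa] at hbadj
      rcases cyc_closure hbadj with hC | hF
      · exact hC
      · exact absurd hF b.2
  exact (wvert_not_C hn) (hstay _ _ p ⟨0, rfl⟩)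

lemma degree_cond (hn : 2 ≤ n) :
    ∀ v : ↥(Fdel n)ᶜ, 2 ≤ (((BH n).induce (Fdel n)ᶜ).neighborSet v).ncard := by
  intro v
  obtain ⟨w1, w2, hne, ha1, ha2, hw1, hw2⟩ := min_degree hn (↑v) v.2
  have m1 : (⟨w1, hw1⟩ : ↥(Fdel n)ᶜ) ∈ ((BH n).induce (Fdel n)ᶜ).neighborSet v := ha1
  have m2 : (⟨w2, hw2⟩ : ↥(Fdel n)ᶜ) ∈ ((BH n).induce (Fdel n)ᶜ).neighborSet v := ha2
  exact two_le_ncard m1 m2 (fun h => hne (congrArg Subtype.val h)) (Set.toFinite _)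

lemma univ_ncard : (Set.univ : Set (Fin n → ZMod 4)).ncard = 4 ^ n := by
  rw [Set.ncard_univ, Nat.card_eq_fintype_card, Fintype.card_fun]
  simp

end final
end BHaux
theorem bh_restricted_two_connectivity (n : ℕ) [NeZero n] (hn : 2 ≤ n) :
    (∃ F : Set (Fin n → ZMod 4), IsRestrictedCut (BH n) 2 F ∧ F.ncard = 4 * n - 4) ∧
    (∀ F : Set (Fin n → ZMod 4), IsRestrictedCut (BH n) 2 F → 4 * n - 4 ≤ F.ncard) := by
  constructor
  · exact ⟨BHaux.Fdel n, ⟨BHaux.not_conn hn, BHaux.degree_cond hn⟩, BHaux.Fdel_ncard hn⟩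
  · intro F hcut
    by_contra hlt
    push_neg at hlt
    have hF : F.ncard ≤ 4 * n - 5 := by omega
    obtain ⟨S, hS2, hSF, hSnbr, hreach⟩ := BHaux.lemP_all n hn inferInstance F hF
    obtain ⟨hdisc, hdeg⟩ := hcut
    have hSempty : ∀ s, s ∉ S := by
      intro s hs
      have hsF : s ∈ Fᶜ := hSF s hs
      have hdg := hdeg ⟨s, hsF⟩
      have hempty : ((BH n).induce Fᶜ).neighborSet ⟨s, hsF⟩ = ∅ := by
        apply Set.eq_empty_iff_forall_notMem.mpr
        intro w hw
        have hadj : (BH n).Adj s ↑w := hw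
        exact w.2 (hSnbr s hs ↑w hadj)
      rw [hempty] at hdg
      simp at hdg
    apply hdisc
    have hvex : ∃ v, v ∉ F := by
      by_contra hc
      push_neg at hc
      have hsub : (Set.univ : Set (Fin n → ZMod 4)) ⊆ F := fun v _ => hc v
      have h1 := Set.ncard_le_ncard hsub (Set.toFinite _)
      rw [BHaux.univ_ncard] at h1
      have hp := BHaux.pow_lemma1 (n - 2)
      have h2 : n - 2 + 1 = n - 1 := by omega
      rw [h2] at hp
      have h3 : 4 ^ (n - 1) ≤ 4 ^ n := Nat.pow_le_pow_right (by norm_num) (by omega)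
      omega
    obtain ⟨v, hv⟩ := hvex
    haveI : Nonempty ↥Fᶜ := ⟨⟨v, hv⟩⟩
    constructor
    intro a b
    have hra : (↑a : Fin n → ZMod 4) ∉ F := a.2
    have hrb : (↑b : Fin n → ZMod 4) ∉ F := b.2
    have hr := hreach ↑a ↑b hra (hSempty _) hrb (hSempty _)
    exact BHaux.HR.toInduce hr hra hrb
end

section
/- For every n ≥ 3, the vertex neighborhood N(T) of the 12-vertex set T in BH_n (the set of vertices not in T that are adjacent to at least one vertex of T) has cardinality exactly 12n − 24. -/
open SimpleGraph

def sigZ (x : ZMod 4) : ZMod 4 := if x = 0 ∨ x = 2 then 1 else 3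

lemma sigZ_flip : ∀ x ε : ZMod 4, (ε = 1 ∨ ε = 3) → sigZ (x + ε) = - sigZ x := by decide

lemma bhSigma_eq {n : ℕ} [NeZero n] (u : Fin n → ZMod 4) : bhSigma u = sigZ (u 0) := rfl

lemma bhRel_symm {n : ℕ} [NeZero n] {u v : Fin n → ZMod 4} (h : bhRel u v) : bhRel v u := by
  obtain ⟨ε, hε, h⟩ := h
  refine ⟨-ε, by rcases hε with h | h <;> subst h <;> decide, ?_⟩
  rcases h with ⟨h0, hrest⟩ | ⟨i, hi, h0, hi2, hrest⟩
  · exact Or.inl ⟨by rw [h0]; ring, fun i hi => (hrest i hi).symm⟩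
  · have hs : bhSigma v = - bhSigma u := by
      rw [bhSigma_eq, bhSigma_eq, h0]; exact sigZ_flip _ _ hε
    refine Or.inr ⟨i, hi, by rw [h0]; ring, by rw [hs, hi2]; ring,
      fun j h1 h2 => (hrest j h1 h2).symm⟩

lemma adj_iff {n : ℕ} [NeZero n] {u v : Fin n → ZMod 4} :
    (BH n).Adj u v ↔ u ≠ v ∧ bhRel u v := by
  rw [BH, SimpleGraph.fromRel_adj]
  constructor
  · rintro ⟨hne, h | h⟩
    exacts [⟨hne, h⟩, ⟨hne, bhRel_symm h⟩]
  · rintro ⟨hne, h⟩; exact ⟨hne, Or.inl h⟩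

def eVertex (n : ℕ) (i : Fin n) (a b c d : ZMod 4) : Fin n → ZMod 4 :=
  fun j => if (j : ℕ) = 0 then a else if (j : ℕ) = 1 then b else
    if (j : ℕ) = 2 then c else if j = i then d else 0

variable {n : ℕ}

lemma bhSigma_tV [NeZero n] (a b c : ZMod 4) : bhSigma (tVertex n a b c) = sigZ a := by
  have : tVertex n a b c 0 = a := by simp [tVertex]
  simp [bhSigma, sigZ, this]

lemma rel_t0 [NeZero n] (a b c ε : ZMod 4) (hε : ε = 1 ∨ ε = 3) :
    bhRel (tVertex n a b c) (tVertex n (a + ε) b c) := by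
  refine ⟨ε, hε, Or.inl ⟨by simp [tVertex], fun i hi => ?_⟩⟩
  have : (i : ℕ) ≠ 0 := Fin.val_ne_zero_iff.mpr hi
  simp [tVertex, this]

lemma rel_t1 [NeZero n] (hn : 3 ≤ n) (a b c ε : ZMod 4) (hε : ε = 1 ∨ ε = 3) :
    bhRel (tVertex n a b c) (tVertex n (a + ε) (b + sigZ a) c) := by
  refine ⟨ε, hε, Or.inr ⟨⟨1, by omega⟩, by simp, by simp [tVertex], ?_, fun j hj0 hj1 => ?_⟩⟩
  · simp [tVertex, bhSigma_tV]
  · have h0 : (j : ℕ) ≠ 0 := Fin.val_ne_zero_iff.mpr hj0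
    have h1 : (j : ℕ) ≠ 1 := by simpa [Fin.ext_iff] using hj1
    simp [tVertex, h0, h1]

lemma rel_t2 [NeZero n] (hn : 3 ≤ n) (a b c ε : ZMod 4) (hε : ε = 1 ∨ ε = 3) :
    bhRel (tVertex n a b c) (tVertex n (a + ε) b (c + sigZ a)) := by
  refine ⟨ε, hε, Or.inr ⟨⟨2, by omega⟩, by simp, by simp [tVertex], ?_, fun j hj0 hj2 => ?_⟩⟩
  · simp [tVertex, bhSigma_tV]
  · have h0 : (j : ℕ) ≠ 0 := Fin.val_ne_zero_iff.mpr hj0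
    have h2 : (j : ℕ) ≠ 2 := by simpa [Fin.ext_iff] using hj2
    simp [tVertex, h0, h2]

lemma rel_te [NeZero n] {i : Fin n} (hi : 3 ≤ (i : ℕ)) (a b c ε : ZMod 4)
    (hε : ε = 1 ∨ ε = 3) :
    bhRel (tVertex n a b c) (eVertex n i (a + ε) b c (sigZ a)) := by
  have h0 : (i : ℕ) ≠ 0 := by omega
  have h1 : (i : ℕ) ≠ 1 := by omega
  have h2 : (i : ℕ) ≠ 2 := by omega
  refine ⟨ε, hε, Or.inr ⟨i, by omega, by simp [tVertex, eVertex], ?_, fun j hj0 hji => ?_⟩⟩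
  · simp [tVertex, eVertex, h0, h1, h2, bhSigma_tV]
  · have hj0' : (j : ℕ) ≠ 0 := Fin.val_ne_zero_iff.mpr hj0
    simp [tVertex, eVertex, hj0', hji]

lemma fin_eq_of_val {j : Fin n} {k : ℕ} (hk : k < n) (h : (j : ℕ) = k) : j = ⟨k, hk⟩ :=
  Fin.ext h

lemma rel_forward [NeZero n] (hn : 3 ≤ n) {a b c : ZMod 4} {v : Fin n → ZMod 4}
    (h : bhRel (tVertex n a b c) v) :
    ∃ ε : ZMod 4, (ε = 1 ∨ ε = 3) ∧
      (v = tVertex n (a + ε) b c ∨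
       v = tVertex n (a + ε) (b + sigZ a) c ∨
       v = tVertex n (a + ε) b (c + sigZ a) ∨
       ∃ i : Fin n, 3 ≤ (i : ℕ) ∧ v = eVertex n i (a + ε) b c (sigZ a)) := by
  obtain ⟨ε, hε, h⟩ := h
  refine ⟨ε, hε, ?_⟩
  have hz : (0 : Fin n) = ⟨0, by omega⟩ := by ext; simp
  rcases h with ⟨h0, hrest⟩ | ⟨i, hi1, h0, hi2, hrest⟩
  · left
    funext j
    by_cases hj0 : (j : ℕ) = 0
    · rw [fin_eq_of_val (by omega) hj0, ← hz, h0]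
      simp [tVertex]
    · rw [hrest j (Fin.val_ne_zero_iff.mp hj0)]
      simp [tVertex, hj0]
  · rw [bhSigma_tV] at hi2
    by_cases hI1 : (i : ℕ) = 1
    · right; left
      funext j
      by_cases hj0 : (j : ℕ) = 0
      · rw [fin_eq_of_val (by omega) hj0, ← hz, h0]; simp [tVertex]
      · by_cases hj1 : (j : ℕ) = 1
        · rw [fin_eq_of_val (by omega) hj1, ← fin_eq_of_val (by omega) hI1, hi2]
          simp [tVertex, hI1]
        · rw [hrest j (Fin.val_ne_zero_iff.mp hj0)
            (by simp [Fin.ext_iff, hI1]; omega)]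
          simp [tVertex, hj0, hj1]
    · by_cases hI2 : (i : ℕ) = 2
      · right; right; left
        funext j
        by_cases hj0 : (j : ℕ) = 0
        · rw [fin_eq_of_val (by omega) hj0, ← hz, h0]; simp [tVertex]
        · by_cases hj2 : (j : ℕ) = 2
          · rw [fin_eq_of_val (by omega) hj2, ← fin_eq_of_val (by omega) hI2, hi2]
            simp [tVertex, hI2]
          · rw [hrest j (Fin.val_ne_zero_iff.mp hj0)
              (by simp [Fin.ext_iff, hI2]; omega)]
            simp [tVertex, hj0, hj2]
      · have hI3 : 3 ≤ (i : ℕ) := by omega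
        right; right; right
        refine ⟨i, hI3, ?_⟩
        funext j
        by_cases hji : j = i
        · subst hji
          rw [hi2]
          simp [tVertex, eVertex, show ¬(j:ℕ)=0 by omega, show ¬(j:ℕ)=1 by omega,
            show ¬(j:ℕ)=2 by omega]
        · by_cases hj0 : (j : ℕ) = 0
          · rw [fin_eq_of_val (by omega) hj0, ← hz, h0]
            simp [tVertex, eVertex, ← hz, hj0]
          · rw [hrest j (Fin.val_ne_zero_iff.mp hj0) hji]
            simp [tVertex, eVertex, hj0, hji]

set_option maxRecDepth 4000

def Tpat : Finset (ZMod 4 × ZMod 4 × ZMod 4) :=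
  {(0,0,0),(2,0,0),(1,0,0),(3,0,0),(0,3,0),(2,3,0),(1,0,1),(3,0,1),(0,3,1),(2,3,1),(1,3,1),(3,3,1)}

def Cpat : Finset (ZMod 4 × ZMod 4 × ZMod 4) :=
  {(0,0,1),(0,0,3),(0,2,1),(1,1,0),(1,3,0),(1,3,2),(2,0,1),(2,0,3),(2,2,1),(3,1,0),(3,3,0),(3,3,2)}

def Epat : Finset (ZMod 4 × ZMod 4 × ZMod 4 × ZMod 4) :=
  {(0,0,0,3),(0,0,1,3),(0,3,1,3),(2,0,0,3),(2,0,1,3),(2,3,1,3),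
   (1,0,0,1),(1,3,0,1),(1,3,1,1),(3,0,0,1),(3,3,0,1),(3,3,1,1)}

lemma mem_Tset_iff {v : Fin n → ZMod 4} :
    v ∈ Tset n ↔ ∃ p ∈ Tpat, v = tVertex n p.1 p.2.1 p.2.2 := by
  constructor
  · intro h
    simp only [Tset, Set.mem_insert_iff, Set.mem_singleton_iff] at h
    rcases h with h|h|h|h|h|h|h|h|h|h|h|h <;> subst h <;> exact ⟨(_,_,_), by decide, rfl⟩
  · rintro ⟨⟨a,b,c⟩, hp, rfl⟩
    simp only [Tpat, Finset.mem_insert, Finset.mem_singleton, Prod.mk.injEq] at hp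
    rcases hp with ⟨rfl,rfl,rfl⟩|⟨rfl,rfl,rfl⟩|⟨rfl,rfl,rfl⟩|⟨rfl,rfl,rfl⟩|⟨rfl,rfl,rfl⟩|
      ⟨rfl,rfl,rfl⟩|⟨rfl,rfl,rfl⟩|⟨rfl,rfl,rfl⟩|⟨rfl,rfl,rfl⟩|⟨rfl,rfl,rfl⟩|⟨rfl,rfl,rfl⟩|
      ⟨rfl,rfl,rfl⟩ <;> simp [Tset]

lemma fact1 : ∀ p ∈ Tpat, ∀ ε : ZMod 4, (ε = 1 ∨ ε = 3) →
    (p.1 + ε, p.2.1, p.2.2) ∈ Tpat ∪ Cpat := by decide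

lemma fact2 : ∀ p ∈ Tpat, ∀ ε : ZMod 4, (ε = 1 ∨ ε = 3) →
    (p.1 + ε, p.2.1 + sigZ p.1, p.2.2) ∈ Tpat ∪ Cpat := by decide

lemma fact3 : ∀ p ∈ Tpat, ∀ ε : ZMod 4, (ε = 1 ∨ ε = 3) →
    (p.1 + ε, p.2.1, p.2.2 + sigZ p.1) ∈ Tpat ∪ Cpat := by decide

lemma fact4 : ∀ p ∈ Tpat, ∀ ε : ZMod 4, (ε = 1 ∨ ε = 3) →
    (p.1 + ε, p.2.1, p.2.2, sigZ p.1) ∈ Epat := by decide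

lemma factC : ∀ p ∈ Cpat, ∃ q ∈ Tpat, ∃ ε : ZMod 4, (ε = 1 ∨ ε = 3) ∧
    (p = (q.1 + ε, q.2.1, q.2.2) ∨ p = (q.1 + ε, q.2.1 + sigZ q.1, q.2.2) ∨
     p = (q.1 + ε, q.2.1, q.2.2 + sigZ q.1)) := by decide

lemma factE : ∀ p ∈ Epat, ∃ q ∈ Tpat, ∃ ε : ZMod 4, (ε = 1 ∨ ε = 3) ∧
    p = (q.1 + ε, q.2.1, q.2.2, sigZ q.1) := by decide

lemma factCT : ∀ p ∈ Cpat, p ∉ Tpat := by decide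

lemma factD : ∀ p ∈ Epat, p.2.2.2 ≠ 0 := by decide

lemma sigZ_ne_zero : ∀ x : ZMod 4, sigZ x ≠ 0 := by decide

lemma Tpat_card : Tpat.card = 12 := by decide

lemma Cpat_card : Cpat.card = 12 := by decide

lemma Epat_card : Epat.card = 12 := by decide

lemma tV_inj (hn : 3 ≤ n) {a b c a' b' c' : ZMod 4}
    (h : tVertex n a b c = tVertex n a' b' c') : a = a' ∧ b = b' ∧ c = c' := by
  refine ⟨?_, ?_, ?_⟩
  · have := congrFun h ⟨0, by omega⟩; simpa [tVertex] using this
  · have := congrFun h ⟨1, by omega⟩; simpa [tVertex] using this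
  · have := congrFun h ⟨2, by omega⟩; simpa [tVertex] using this

lemma eV_inj {i : Fin n} (hi : 3 ≤ (i : ℕ)) {a b c d a' b' c' d' : ZMod 4}
    (h : eVertex n i a b c d = eVertex n i a' b' c' d') :
    a = a' ∧ b = b' ∧ c = c' ∧ d = d' := by
  have hn : 3 ≤ n := le_trans hi (le_of_lt i.isLt)
  refine ⟨?_, ?_, ?_, ?_⟩
  · have := congrFun h ⟨0, by omega⟩
    simpa [eVertex, Fin.ext_iff, show ¬ (0 : ℕ) = (i:ℕ) by omega] using this
  · have := congrFun h ⟨1, by omega⟩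
    simpa [eVertex, Fin.ext_iff, show ¬ (1 : ℕ) = (i:ℕ) by omega] using this
  · have := congrFun h ⟨2, by omega⟩
    simpa [eVertex, Fin.ext_iff, show ¬ (2 : ℕ) = (i:ℕ) by omega] using this
  · have := congrFun h i
    simpa [eVertex, show ¬ (i:ℕ) = 0 by omega, show ¬ (i:ℕ) = 1 by omega,
      show ¬ (i:ℕ) = 2 by omega] using this

lemma eV_apply_self {a b c d : ZMod 4} {i : Fin n} (hi : 3 ≤ (i : ℕ)) :
    eVertex n i a b c d i = d := by
  simp [eVertex, show ¬(i:ℕ)=0 by omega, show ¬(i:ℕ)=1 by omega, show ¬(i:ℕ)=2 by omega]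

lemma eV_apply_other {a b c d : ZMod 4} {i j : Fin n} (hj : 3 ≤ (j : ℕ)) (hji : j ≠ i) :
    eVertex n i a b c d j = 0 := by
  simp [eVertex, show ¬(j:ℕ)=0 by omega, show ¬(j:ℕ)=1 by omega, show ¬(j:ℕ)=2 by omega, hji]

lemma tV_apply_big' {a b c : ZMod 4} {j : Fin n} (hj : 3 ≤ (j : ℕ)) :
    tVertex n a b c j = 0 := by
  simp [tVertex, show ¬(j:ℕ)=0 by omega, show ¬(j:ℕ)=1 by omega, show ¬(j:ℕ)=2 by omega]

def NFin (n : ℕ) : Finset (Fin n → ZMod 4) :=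
  (Cpat.image fun p => tVertex n p.1 p.2.1 p.2.2) ∪
    (Finset.univ.filter fun i : Fin n => 3 ≤ (i : ℕ)).biUnion
      (fun i => Epat.image fun p => eVertex n i p.1 p.2.1 p.2.2.1 p.2.2.2)

lemma card_NFin (hn : 3 ≤ n) : (NFin n).card = 12 * n - 24 := by
  have hIcard : (Finset.univ.filter fun i : Fin n => 3 ≤ (i : ℕ)).card = n - 3 := by
    have heq : (Finset.univ.filter fun i : Fin n => ¬ 3 ≤ (i : ℕ)) =
        {⟨0, by omega⟩, ⟨1, by omega⟩, ⟨2, by omega⟩} := by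
      ext j
      simp only [Finset.mem_filter, Finset.mem_univ, true_and, Finset.mem_insert,
        Finset.mem_singleton, Fin.ext_iff]
      omega
    have h3 : (Finset.univ.filter fun i : Fin n => ¬ 3 ≤ (i : ℕ)).card = 3 := by
      rw [heq, Finset.card_insert_of_notMem (by simp), Finset.card_insert_of_notMem (by simp),
        Finset.card_singleton]
    have := Finset.card_filter_add_card_filter_not
      (s := (Finset.univ : Finset (Fin n))) (p := fun i : Fin n => 3 ≤ (i : ℕ))
    rw [Finset.card_univ, Fintype.card_fin] at this
    omega
  have hdisj : Disjoint 
      (Cpat.image fun p => tVertex n p.1 p.2.1 p.2.2)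
      ((Finset.univ.filter fun i : Fin n => 3 ≤ (i : ℕ)).biUnion
        (fun i => Epat.image fun p => eVertex n i p.1 p.2.1 p.2.2.1 p.2.2.2)) := by
    rw [Finset.disjoint_left]
    rintro w hw hw2
    obtain ⟨p, hp, rfl⟩ := Finset.mem_image.mp hw
    obtain ⟨i, hiI, him⟩ := Finset.mem_biUnion.mp hw2
    have hi3 : 3 ≤ (i : ℕ) := (Finset.mem_filter.mp hiI).2
    obtain ⟨q, hq, he⟩ := Finset.mem_image.mp him
    have hval := congrFun he i
    rw [eV_apply_self hi3, tV_apply_big' hi3] at hval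
    exact factD q hq hval
  rw [NFin, Finset.card_union_of_disjoint hdisj]
  have hC : (Cpat.image fun p => tVertex n p.1 p.2.1 p.2.2).card = 12 := by
    rw [Finset.card_image_of_injOn, Cpat_card]
    intro p _ q _ he
    obtain ⟨h1, h2, h3⟩ := tV_inj hn he
    exact Prod.ext h1 (Prod.ext h2 h3)
  have hB : ((Finset.univ.filter fun i : Fin n => 3 ≤ (i : ℕ)).biUnion
      (fun i => Epat.image fun p => eVertex n i p.1 p.2.1 p.2.2.1 p.2.2.2)).card
      = (n - 3) * 12 := by
    rw [Finset.card_biUnion]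
    · have hcards : ∀ i ∈ (Finset.univ.filter fun i : Fin n => 3 ≤ (i : ℕ)),
          (Epat.image fun p => eVertex n i p.1 p.2.1 p.2.2.1 p.2.2.2).card = 12 := by
        intro i hi
        have hi3 : 3 ≤ (i : ℕ) := (Finset.mem_filter.mp hi).2
        rw [Finset.card_image_of_injOn, Epat_card]
        intro p _ q _ he
        obtain ⟨h1, h2, h3, h4⟩ := eV_inj hi3 he
        exact Prod.ext h1 (Prod.ext h2 (Prod.ext h3 h4))
      rw [Finset.sum_congr rfl hcards, Finset.sum_const, smul_eq_mul, hIcard]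
    · intro i hi j hj hij
      have hi3 : 3 ≤ (i : ℕ) := (Finset.mem_filter.mp hi).2
      rw [Function.onFun, Finset.disjoint_left]
      rintro w hw hw2
      obtain ⟨p, hp, rfl⟩ := Finset.mem_image.mp hw
      obtain ⟨q, hq, he⟩ := Finset.mem_image.mp hw2
      have hval := congrFun he i
      rw [eV_apply_self hi3, eV_apply_other hi3 ?_] at hval
      · exact factD p hp hval.symm
      · intro h; exact hij (h ▸ rfl)
  rw [hC, hB]
  omega

lemma nbhd_eq [NeZero n] (hn : 3 ≤ n) :
    setNbhd (BH n) (Tset n) = ↑(NFin n) := by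
  ext v
  simp only [setNbhd, Set.mem_setOf_eq, Finset.coe_union, Finset.mem_coe]
  constructor
  · rintro ⟨hvT, u, huT, hadj⟩
    obtain ⟨⟨a, b, c⟩, hp, rfl⟩ := mem_Tset_iff.mp huT
    have hrel : bhRel (tVertex n a b c) v := bhRel_symm (adj_iff.mp hadj).2
    obtain ⟨ε, hε, hcase⟩ := rel_forward hn hrel
    rcases hcase with rfl | rfl | rfl | ⟨i, hi3, rfl⟩
    · rcases Finset.mem_union.mp (fact1 (a, b, c) hp ε hε) with h | h
      · exact absurd (mem_Tset_iff.mpr ⟨(a + ε, b, c), h, rfl⟩) hvT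
      · exact Finset.mem_union_left _ (Finset.mem_image_of_mem _ h)
    · rcases Finset.mem_union.mp (fact2 (a, b, c) hp ε hε) with h | h
      · exact absurd (mem_Tset_iff.mpr ⟨(a + ε, b + sigZ a, c), h, rfl⟩) hvT
      · exact Finset.mem_union_left _ (Finset.mem_image_of_mem _ h)
    · rcases Finset.mem_union.mp (fact3 (a, b, c) hp ε hε) with h | h
      · exact absurd (mem_Tset_iff.mpr ⟨(a + ε, b, c + sigZ a), h, rfl⟩) hvT
      · exact Finset.mem_union_left _ (Finset.mem_image_of_mem _ h)
    · refine Finset.mem_union_right _ (Finset.mem_biUnion.mpr ⟨i, by simp [hi3], ?_⟩)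
      exact Finset.mem_image_of_mem _ (fact4 (a, b, c) hp ε hε)
  · intro hv
    rcases Finset.mem_union.mp hv with h | h
    · obtain ⟨⟨a, b, c⟩, hpC, rfl⟩ := Finset.mem_image.mp h
      have hnotT : ∀ q ∈ Tpat, tVertex n a b c ≠ tVertex n q.1 q.2.1 q.2.2 := by
        intro q hq he
        obtain ⟨h1, h2, h3⟩ := tV_inj hn he
        exact factCT (a, b, c) hpC (by rw [show ((a,b,c) : ZMod 4 × ZMod 4 × ZMod 4) = q from
          Prod.ext h1 (Prod.ext h2 h3)]; exact hq)
      refine ⟨?_, ?_⟩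
      · intro hT
        obtain ⟨q, hq, heq⟩ := mem_Tset_iff.mp hT
        exact hnotT q hq heq
      · obtain ⟨q, hq, ε, hε, hd⟩ := factC (a, b, c) hpC
        refine ⟨tVertex n q.1 q.2.1 q.2.2, mem_Tset_iff.mpr ⟨q, hq, rfl⟩,
          adj_iff.mpr ⟨hnotT q hq, bhRel_symm ?_⟩⟩
        rcases hd with he | he | he <;>
          (simp only [Prod.mk.injEq] at he; obtain ⟨rfl, rfl, rfl⟩ := he)
        · exact rel_t0 _ _ _ _ hε
        · exact rel_t1 hn _ _ _ _ hε
        · exact rel_t2 hn _ _ _ _ hε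
    · obtain ⟨i, hiI, him⟩ := Finset.mem_biUnion.mp h
      have hi3 : 3 ≤ (i : ℕ) := (Finset.mem_filter.mp hiI).2
      obtain ⟨⟨a, b, c, d⟩, hpE, rfl⟩ := Finset.mem_image.mp him
      refine ⟨?_, ?_⟩
      · intro hT
        obtain ⟨q, hq, heq⟩ := mem_Tset_iff.mp hT
        have h1 := congrFun heq i
        rw [eV_apply_self hi3, tV_apply_big' hi3] at h1
        exact factD (a, b, c, d) hpE h1
      · obtain ⟨q, hq, ε, hε, he⟩ := factE (a, b, c, d) hpE
        simp only [Prod.mk.injEq] at he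
        obtain ⟨rfl, rfl, rfl, rfl⟩ := he
        refine ⟨tVertex n q.1 q.2.1 q.2.2, mem_Tset_iff.mpr ⟨q, hq, rfl⟩,
          adj_iff.mpr ⟨?_, bhRel_symm (rel_te hi3 _ _ _ _ hε)⟩⟩
        intro he2
        have := congrFun he2 i
        rw [eV_apply_self hi3, tV_apply_big' hi3] at this
        exact sigZ_ne_zero _ this

theorem bh_nbhd_T_card (n : ℕ) [NeZero n] (hn : 3 ≤ n) :
    (setNbhd (BH n) (Tset n)).ncard = 12 * n - 24 := by
  rw [nbhd_eq hn, Set.ncard_coe_finset, card_NFin hn]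
end
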